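/- arXiv:1607.00053 — 7 statements merged into one kernel-verified Lean document; each statement's English description precedes it below -/
import Mathlib

section
/- Let G be a finite eulerian graph (a finite connected simple graph in which every vertex has even degree) and let k be a positive integer with k ≡ |E(G)| (mod 2). Then G admits a k-odd decomposition if and only if G contains at least k pairwise edge-disjoint odd circuits. -/
open SimpleGraph

/-- An eulerian subgraph of `G`: a connected (hence vertex-nonempty) subgraph of `G`
in which every vertex has even degree. -/
def IsEulerianSubgraph {V : Type*} (G : SimpleGraph V) (H : G.Subgraph) : Prop :=
  H.Connected ∧ ∀ v ∈ H.verts, Even ((H.neighborSet v).ncard)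

/-- A `k`-odd decomposition of `G`: a partition of the edge set of `G` into the edge
sets of `k` eulerian subgraphs, each having an odd number of edges. -/
def IsKOddDecomposition {V : Type*} (G : SimpleGraph V) (k : ℕ)
    (D : Fin k → G.Subgraph) : Prop :=
  (∀ i, IsEulerianSubgraph G (D i)) ∧
  (∀ i, Odd ((D i).edgeSet.ncard)) ∧
  (∀ i j, i ≠ j → Disjoint ((D i).edgeSet) ((D j).edgeSet)) ∧
  (⋃ i, (D i).edgeSet) = G.edgeSet

/-- `G` contains `k` pairwise edge-disjoint odd circuits (cycles of odd length). -/
def HasKEdgeDisjointOddCircuits {V : Type*} (G : SimpleGraph V) (k : ℕ) : Prop :=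
  ∃ (u : Fin k → V) (c : (i : Fin k) → G.Walk (u i) (u i)),
    (∀ i, (c i).IsCycle) ∧
    (∀ i, Odd (c i).length) ∧
    (∀ i j, i ≠ j → ∀ e, e ∈ (c i).edges → e ∉ (c j).edges)

/-!
A subgraph in which every degree is even is an edge-disjoint union of cycles (Veblen), and the
cycles can be chosen to include any given edge-disjoint cycles of it.

For `⇒`, every part of a `k`-odd decomposition has even degrees and an odd number of edges, so
one of the cycles decomposing it is odd. For `⇐`, extend the `k` odd circuits to a cycle
decomposition of `G`: it has at least `k` odd members, and their number has the parity of
`|E(G)|`, hence of `k`. As `G` is connected, every member meets another one, and merging two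
members that meet gives an eulerian subgraph. Merge an even member with any neighbour, or two odd
members while there are at least `k + 2` odd ones; this ends with exactly `k` members, all odd.
-/
namespace SimpleGraph

variable {V : Type*} {G : SimpleGraph V}

/-- Extend the path at its start for as long as possible; when the start has a neighbour other
than `p.snd` that already lies on the path, that neighbour closes a cycle. -/
theorem Walk.IsPath.exists_isCycle_of_ncard_neighborSet_ne_one [Finite V]
    (hdeg : ∀ v, (G.neighborSet v).ncard ≠ 1) {u v : V} {p : G.Walk u v} (hp : p.IsPath)
    (hnil : ¬p.Nil) : ∃ (w : V) (c : G.Walk w w), c.IsCycle := by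
  classical
  obtain ⟨w, hw, hwsnd⟩ : ∃ w, G.Adj u w ∧ w ≠ p.snd := by
    have hpos : 0 < (G.neighborSet u).ncard :=
      (Set.ncard_pos (Set.toFinite _)).mpr ⟨_, p.adj_snd hnil⟩
    have hne : (G.neighborSet u).ncard ≠ 1 := hdeg u
    exact Set.exists_ne_of_one_lt_ncard (s := G.neighborSet u) (by omega) _
  by_cases hwp : w ∈ p.support
  · refine ⟨u, .cons hw (p.takeUntil w hwp).reverse, ?_⟩
    rw [Walk.cons_isCycle_iff, Walk.edges_reverse, List.mem_reverse]
    exact ⟨(hp.takeUntil hwp).reverse, fun he =>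
      hwsnd (hp.eq_snd_of_mem_edges (p.edges_takeUntil_subset_edges hwp he))⟩
  · have hq : (Walk.cons hw.symm p).IsPath := hp.cons hwp
    exact hq.exists_isCycle_of_ncard_neighborSet_ne_one hdeg Walk.not_nil_cons
termination_by Nat.card V - p.length
decreasing_by
  have : Fintype V := Fintype.ofFinite V
  have := hq.length_lt
  simp only [Walk.length_cons, Nat.card_eq_fintype_card] at *
  omega

theorem exists_isCycle_of_ncard_neighborSet_ne_one [Finite V]
    (hdeg : ∀ v, (G.neighborSet v).ncard ≠ 1) {u v : V} (huv : G.Adj u v) :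
    ∃ (w : V) (c : G.Walk w w), c.IsCycle :=
  (Adj.isPath_toWalk huv).exists_isCycle_of_ncard_neighborSet_ne_one hdeg Walk.not_nil_cons

theorem Walk.IsTrail.ncard_edgeSet {u v : V} {p : G.Walk u v} (hp : p.IsTrail) :
    p.edgeSet.ncard = p.length := by
  classical
  rw [← Walk.coe_edges_toFinset, Set.ncard_coe_finset, List.toFinset_card_of_nodup hp.edges_nodup,
    Walk.length_edges]

namespace Subgraph

def HasEvenDegrees (H : G.Subgraph) : Prop :=
  ∀ v, Even (H.neighborSet v).ncard

variable {H K : G.Subgraph}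

theorem edgeSet_deleteEdges (s : Set (Sym2 V)) :
    (H.deleteEdges s).edgeSet = H.edgeSet \ s := by
  ext ⟨x, y⟩
  simp [deleteEdges_adj]

theorem neighborSet_deleteEdges_edgeSet (v : V) :
    (H.deleteEdges K.edgeSet).neighborSet v = H.neighborSet v \ K.neighborSet v := by
  ext w
  simp [deleteEdges_adj]

theorem HasEvenDegrees.deleteEdges [Finite V] (hH : H.HasEvenDegrees) (hK : K.HasEvenDegrees)
    (hKH : K.edgeSet ⊆ H.edgeSet) : (H.deleteEdges K.edgeSet).HasEvenDegrees := fun v => by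
  have hsub : K.neighborSet v ⊆ H.neighborSet v := fun w hw => hKH (a := s(v, w)) hw
  rw [neighborSet_deleteEdges_edgeSet, Set.ncard_sdiff hsub]
  exact (hH v).tsub (hK v)

theorem HasEvenDegrees.exists_isCycle [Finite V] (hH : H.HasEvenDegrees)
    (hne : H.edgeSet.Nonempty) :
    ∃ (v : V) (c : G.Walk v v), c.IsCycle ∧ c.edgeSet ⊆ H.edgeSet := by
  obtain ⟨⟨x, y⟩, hxy⟩ := hne
  have hdeg (v : V) : (H.spanningCoe.neighborSet v).ncard ≠ 1 := fun h =>
    Nat.not_even_one (h ▸ hH v)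
  obtain ⟨v, c, hc⟩ := exists_isCycle_of_ncard_neighborSet_ne_one hdeg (u := x) (v := y) hxy
  refine ⟨v, c.mapLe H.spanningCoe_le, hc.mapLe _, ?_⟩
  rw [Walk.edgeSet_mapLe_eq_edgeSet, ← edgeSet_spanningCoe]
  exact c.edges_subset_edgeSet

end Subgraph

theorem _root_.IsEulerianSubgraph.hasEvenDegrees {H : G.Subgraph} (hH : IsEulerianSubgraph G H) :
    H.HasEvenDegrees := by
  intro v
  by_cases hv : v ∈ H.verts
  · exact hH.2 v hv
  · have : H.neighborSet v = ∅ := Set.eq_empty_of_forall_notMem fun _ hw => hv (H.edge_vert hw)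
    simp [this]

theorem _root_.IsEulerianSubgraph.sup [Finite V] {A B : G.Subgraph} (hA : IsEulerianSubgraph G A)
    (hB : IsEulerianSubgraph G B) (hdisj : Disjoint A.edgeSet B.edgeSet)
    (hmeet : (A ⊓ B).verts.Nonempty) : IsEulerianSubgraph G (A ⊔ B) := by
  refine ⟨Subgraph.connected_sup hA.1.preconnected hB.1.preconnected hmeet, fun v _ => ?_⟩
  have hdisj' : Disjoint (A.neighborSet v) (B.neighborSet v) :=
    Set.disjoint_left.mpr fun w hwA hwB =>
      Set.disjoint_left.mp hdisj (show s(v, w) ∈ A.edgeSet from hwA) hwB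
  rw [Subgraph.neighborSet_sup, Set.ncard_union_eq hdisj']
  exact (hA.hasEvenDegrees v).add (hB.hasEvenDegrees v)

def IsCycleSubgraph (G : SimpleGraph V) (H : G.Subgraph) : Prop :=
  ∃ (v : V) (c : G.Walk v v), c.IsCycle ∧ c.toSubgraph = H

theorem IsCycleSubgraph.isEulerianSubgraph {H : G.Subgraph} (hH : G.IsCycleSubgraph H) :
    IsEulerianSubgraph G H := by
  obtain ⟨v, c, hc, rfl⟩ := hH
  refine ⟨c.toSubgraph_connected, fun w hw => ?_⟩
  rw [hc.ncard_neighborSet_toSubgraph_eq_two (c.mem_verts_toSubgraph.mp hw)]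
  exact even_two

theorem IsCycleSubgraph.edgeSet_nonempty {H : G.Subgraph} (hH : G.IsCycleSubgraph H) :
    H.edgeSet.Nonempty := by
  obtain ⟨v, c, hc, rfl⟩ := hH
  apply Set.nonempty_of_ncard_ne_zero
  rw [Walk.edgeSet_toSubgraph, hc.isTrail.ncard_edgeSet]
  have := hc.three_le_length
  omega

structure IsEdgeDecomposition (𝓕 : Finset G.Subgraph) (E : Set (Sym2 V)) : Prop where
  edgeSet_nonempty : ∀ A ∈ 𝓕, A.edgeSet.Nonempty
  pairwiseDisjoint : (𝓕 : Set G.Subgraph).PairwiseDisjoint Subgraph.edgeSet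
  biUnion_edgeSet : ⋃ A ∈ 𝓕, A.edgeSet = E

section Decomposition

open scoped Classical

namespace IsEdgeDecomposition

variable {𝓕 : Finset G.Subgraph} {E : Set (Sym2 V)} {A B : G.Subgraph}

theorem edgeSet_subset (h : IsEdgeDecomposition 𝓕 E) (hA : A ∈ 𝓕) : A.edgeSet ⊆ E :=
  h.biUnion_edgeSet ▸ Set.subset_biUnion_of_mem (u := Subgraph.edgeSet) (Finset.mem_coe.mpr hA)

theorem exists_mem {e : Sym2 V} (h : IsEdgeDecomposition 𝓕 E) (he : e ∈ E) :
    ∃ A ∈ 𝓕, e ∈ A.edgeSet := by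
  rw [← h.biUnion_edgeSet] at he
  simpa using he

theorem ncard_eq_sum [Finite V] (h : IsEdgeDecomposition 𝓕 E) :
    E.ncard = ∑ A ∈ 𝓕, A.edgeSet.ncard := by
  rw [← h.biUnion_edgeSet, ← finsum_mem_coe_finset, ← Set.Finite.ncard_biUnion 𝓕.finite_toSet
    (fun _ _ => Set.toFinite _) h.pairwiseDisjoint]
  simp

theorem erase (h : IsEdgeDecomposition 𝓕 E) (hA : A ∈ 𝓕) :
    IsEdgeDecomposition (𝓕.erase A) (E \ A.edgeSet) where
  edgeSet_nonempty B hB := h.edgeSet_nonempty B (Finset.mem_of_mem_erase hB)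
  pairwiseDisjoint := h.pairwiseDisjoint.subset (by simp)
  biUnion_edgeSet := by
    ext e
    simp only [Set.mem_iUnion, Finset.mem_erase, Set.mem_sdiff, exists_prop]
    constructor
    · rintro ⟨B, ⟨hBA, hB⟩, he⟩
      exact ⟨h.edgeSet_subset hB he, Set.disjoint_left.mp (h.pairwiseDisjoint hB hA hBA) he⟩
    · rintro ⟨he, heA⟩
      obtain ⟨B, hB, heB⟩ := h.exists_mem he
      exact ⟨B, ⟨fun hBA => heA (hBA ▸ heB), hB⟩, heB⟩

theorem insert (h : IsEdgeDecomposition 𝓕 (E \ A.edgeSet)) (hA : A.edgeSet.Nonempty)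
    (hAE : A.edgeSet ⊆ E) : IsEdgeDecomposition (insert A 𝓕) E where
  edgeSet_nonempty := Finset.forall_mem_insert _ _ _ |>.mpr ⟨hA, h.edgeSet_nonempty⟩
  pairwiseDisjoint := by
    rw [Finset.coe_insert]
    exact h.pairwiseDisjoint.insert fun B hB _ =>
      Set.disjoint_of_subset_right (h.edgeSet_subset hB) Set.disjoint_sdiff_right
  biUnion_edgeSet := by
    rw [Finset.set_biUnion_insert, h.biUnion_edgeSet, Set.union_sdiff_cancel hAE]

theorem notMem (h : IsEdgeDecomposition 𝓕 (E \ A.edgeSet)) (hA : A.edgeSet.Nonempty) : A ∉ 𝓕 :=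
  fun hA𝓕 => hA.elim fun _ he => (h.edgeSet_subset hA𝓕 he).2 he

/-- A walk from a vertex of `A` to a vertex of `B` leaves `A` along an edge of another member,
which then meets `A`. -/
theorem exists_ne_inf_verts_nonempty (hG : G.Connected) (h : IsEdgeDecomposition 𝓕 G.edgeSet)
    (hA : A ∈ 𝓕) (hB : B ∈ 𝓕) (hAB : A ≠ B) : ∃ C ∈ 𝓕, C ≠ A ∧ (A ⊓ C).verts.Nonempty := by
  have hverts (D : G.Subgraph) (hD : D ∈ 𝓕) : ∃ x, x ∈ D.verts := by
    obtain ⟨⟨x, y⟩, hxy⟩ := h.edgeSet_nonempty D hD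
    exact ⟨x, D.edge_vert hxy⟩
  obtain ⟨x, hx⟩ := hverts A hA
  obtain ⟨y, hy⟩ := hverts B hB
  suffices ∀ {x y : V} (p : G.Walk x y), x ∈ A.verts → y ∈ B.verts →
      ∃ C ∈ 𝓕, C ≠ A ∧ (A ⊓ C).verts.Nonempty from this (hG x y).some hx hy
  intro x y p
  induction p with
  | nil => exact fun hx hy => ⟨B, hB, hAB.symm, _, hx, hy⟩
  | cons hadj p ih =>
    intro hx hy
    obtain ⟨C, hC, hxC⟩ := h.exists_mem (G.mem_edgeSet.mpr hadj)
    by_cases hCA : C = A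
    · exact ih (hCA ▸ C.edge_vert hxC.symm) hy
    · exact ⟨C, hC, hCA, _, hx, C.edge_vert hxC⟩

theorem exists_isKOddDecomposition_card (h : IsEdgeDecomposition 𝓕 G.edgeSet)
    (heul : ∀ A ∈ 𝓕, IsEulerianSubgraph G A) (hodd : ∀ A ∈ 𝓕, Odd A.edgeSet.ncard) :
    ∃ D : Fin 𝓕.card → G.Subgraph, IsKOddDecomposition G 𝓕.card D := by
  let e := 𝓕.equivFin.symm
  refine ⟨fun i => e i, fun i => heul _ (e i).2, fun i => hodd _ (e i).2,
    fun i j hij => h.pairwiseDisjoint (e i).2 (e j).2 fun hij' =>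
      hij (e.injective (Subtype.ext hij')), ?_⟩
  rw [← h.biUnion_edgeSet, e.surjective.iUnion_comp (fun A : 𝓕 => (A : G.Subgraph).edgeSet),
    Set.iUnion_subtype]

variable [Finite V]

/-- `∑ C ∈ 𝓕, C.edgeSet.ncard % 2` counts the odd members: merging `A` with a member that meets it
loses at most two of them, and none when `A` is even. -/
theorem exists_merge (hG : G.Connected) (h : IsEdgeDecomposition 𝓕 G.edgeSet)
    (heul : ∀ A ∈ 𝓕, IsEulerianSubgraph G A) (hA : A ∈ 𝓕) (hB : B ∈ 𝓕) (hAB : A ≠ B) :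
    ∃ 𝓕' : Finset G.Subgraph, IsEdgeDecomposition 𝓕' G.edgeSet ∧
      (∀ A ∈ 𝓕', IsEulerianSubgraph G A) ∧ 𝓕'.card < 𝓕.card ∧
      ∑ C ∈ 𝓕, C.edgeSet.ncard % 2 ≤ ∑ C ∈ 𝓕', C.edgeSet.ncard % 2 + 2 * (A.edgeSet.ncard % 2) := by
  obtain ⟨C, hC, hCA, hmeet⟩ := h.exists_ne_inf_verts_nonempty hG hA hB hAB
  have hC' : C ∈ 𝓕.erase A := Finset.mem_erase.mpr ⟨hCA, hC⟩
  have hdisj : Disjoint A.edgeSet C.edgeSet := h.pairwiseDisjoint hA hC hCA.symm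
  have hR : IsEdgeDecomposition ((𝓕.erase A).erase C) (G.edgeSet \ (A ⊔ C).edgeSet) := by
    simpa only [Set.sdiff_sdiff, Subgraph.edgeSet_sup] using (h.erase hA).erase hC'
  have hne : (A ⊔ C).edgeSet.Nonempty := by
    rw [Subgraph.edgeSet_sup]
    exact (h.edgeSet_nonempty A hA).inl
  have hsub : (A ⊔ C).edgeSet ⊆ G.edgeSet := by
    rw [Subgraph.edgeSet_sup]
    exact Set.union_subset (h.edgeSet_subset hA) (h.edgeSet_subset hC)
  have hnotMem := hR.notMem hne
  refine ⟨_, hR.insert hne hsub, ?_, ?_, ?_⟩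
  · refine Finset.forall_mem_insert _ _ _ |>.mpr ⟨(heul A hA).sup (heul C hC) hdisj hmeet, ?_⟩
    exact fun D hD => heul D (Finset.mem_of_mem_erase (Finset.mem_of_mem_erase hD))
  · have := Finset.card_pos.mpr ⟨C, hC'⟩
    rw [Finset.card_insert_of_notMem hnotMem, Finset.card_erase_of_mem hC',
      Finset.card_erase_of_mem hA] at *
    omega
  · rw [Finset.sum_insert hnotMem, ← Finset.add_sum_erase _ _ hA, ← Finset.add_sum_erase _ _ hC',
      Subgraph.edgeSet_sup, Set.ncard_union_eq hdisj]
    omega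

theorem exists_isKOddDecomposition (hG : G.Connected) {k : ℕ} (hk : 0 < k)
    (hpar : k % 2 = G.edgeSet.ncard % 2) (h : IsEdgeDecomposition 𝓕 G.edgeSet)
    (heul : ∀ A ∈ 𝓕, IsEulerianSubgraph G A) (hodd : k ≤ ∑ A ∈ 𝓕, A.edgeSet.ncard % 2) :
    ∃ D : Fin k → G.Subgraph, IsKOddDecomposition G k D := by
  induction hn : 𝓕.card using Nat.strong_induction_on generalizing 𝓕 with
  | _ n ih =>
  subst hn
  have hsum : (∑ A ∈ 𝓕, A.edgeSet.ncard % 2) % 2 = k % 2 := by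
    rw [← Finset.sum_nat_mod, ← h.ncard_eq_sum, hpar]
  by_cases hall : ∀ A ∈ 𝓕, Odd A.edgeSet.ncard
  · have hcard : ∑ A ∈ 𝓕, A.edgeSet.ncard % 2 = 𝓕.card := by
      rw [Finset.card_eq_sum_ones]
      exact Finset.sum_congr rfl fun A hA => Nat.odd_iff.mp (hall A hA)
    obtain hk' | hk' : 𝓕.card = k ∨ k + 2 ≤ 𝓕.card := by omega
    · exact hk' ▸ h.exists_isKOddDecomposition_card heul hall
    obtain ⟨A, hA⟩ := Finset.card_pos.mp (by omega : 0 < 𝓕.card)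
    obtain ⟨B, hB, hBA⟩ := Finset.exists_mem_ne (s := 𝓕) (by omega) A
    obtain ⟨𝓕', h', heul', hlt, hle⟩ := h.exists_merge hG heul hA hB hBA.symm
    exact ih _ hlt h' heul' (by omega) rfl
  · push Not at hall
    obtain ⟨A, hA, hAeven⟩ := hall
    have hAeven' := Nat.not_odd_iff.mp hAeven
    obtain ⟨B, hB, hBodd⟩ : ∃ B ∈ 𝓕, B.edgeSet.ncard % 2 ≠ 0 :=
      Finset.exists_ne_zero_of_sum_ne_zero (by omega)
    obtain ⟨𝓕', h', heul', hlt, hle⟩ :=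
      h.exists_merge hG heul hA hB (by rintro rfl; exact hBodd hAeven')
    exact ih _ hlt h' heul' (by omega) rfl

end IsEdgeDecomposition

namespace Subgraph.HasEvenDegrees

variable [Finite V] {H : G.Subgraph}

theorem exists_cycleDecomposition (hH : H.HasEvenDegrees) :
    ∃ 𝓒 : Finset G.Subgraph, (∀ C ∈ 𝓒, G.IsCycleSubgraph C) ∧ IsEdgeDecomposition 𝓒 H.edgeSet := by
  induction hn : H.edgeSet.ncard using Nat.strong_induction_on generalizing H with
  | _ n ih =>
  rcases H.edgeSet.eq_empty_or_nonempty with hemp | hne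
  · exact ⟨∅, by simp, ⟨by simp, by simp, by simp [hemp]⟩⟩
  obtain ⟨v, c, hc, hcH⟩ := hH.exists_isCycle hne
  have hC : G.IsCycleSubgraph c.toSubgraph := ⟨v, c, hc, rfl⟩
  have hCH : c.toSubgraph.edgeSet ⊆ H.edgeSet := by rwa [Walk.edgeSet_toSubgraph]
  have hlt : (H.deleteEdges c.toSubgraph.edgeSet).edgeSet.ncard < n := by
    have := Set.ncard_le_ncard hCH
    have := (Set.ncard_pos (Set.toFinite _)).mpr hC.edgeSet_nonempty
    rw [edgeSet_deleteEdges, Set.ncard_sdiff hCH]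
    omega
  obtain ⟨𝓒, h𝓒, hdec⟩ :=
    ih _ hlt (hH.deleteEdges hC.isEulerianSubgraph.hasEvenDegrees hCH) rfl
  rw [edgeSet_deleteEdges] at hdec
  exact ⟨insert _ 𝓒, Finset.forall_mem_insert _ _ _ |>.mpr ⟨hC, h𝓒⟩,
    hdec.insert hC.edgeSet_nonempty hCH⟩

theorem exists_cycleDecomposition_superset (hH : H.HasEvenDegrees) {𝓐 : Finset G.Subgraph}
    (h𝓐 : ∀ A ∈ 𝓐, G.IsCycleSubgraph A ∧ A.edgeSet ⊆ H.edgeSet)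
    (hdisj : (𝓐 : Set G.Subgraph).PairwiseDisjoint Subgraph.edgeSet) :
    ∃ 𝓒 : Finset G.Subgraph, 𝓐 ⊆ 𝓒 ∧ (∀ C ∈ 𝓒, G.IsCycleSubgraph C) ∧
      IsEdgeDecomposition 𝓒 H.edgeSet := by
  induction 𝓐 using Finset.induction_on generalizing H with
  | empty =>
    obtain ⟨𝓒, h𝓒⟩ := hH.exists_cycleDecomposition
    exact ⟨𝓒, Finset.empty_subset _, h𝓒⟩
  | insert A 𝓐 hA ih =>
    rw [Finset.forall_mem_insert] at h𝓐
    rw [Finset.coe_insert, Set.pairwiseDisjoint_insert] at hdisj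
    obtain ⟨⟨hAcyc, hAH⟩, h𝓐⟩ := h𝓐
    have h𝓐' (B : G.Subgraph) (hB : B ∈ 𝓐) :
        G.IsCycleSubgraph B ∧ B.edgeSet ⊆ (H.deleteEdges A.edgeSet).edgeSet := by
      rw [edgeSet_deleteEdges]
      refine ⟨(h𝓐 B hB).1, Set.subset_sdiff.mpr ⟨(h𝓐 B hB).2, ?_⟩⟩
      exact (hdisj.2 B hB (ne_of_mem_of_not_mem hB hA).symm).symm
    obtain ⟨𝓒, h𝓐𝓒, h𝓒, hdec⟩ :=
      ih (hH.deleteEdges hAcyc.isEulerianSubgraph.hasEvenDegrees hAH) h𝓐' hdisj.1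
    rw [edgeSet_deleteEdges] at hdec
    exact ⟨insert A 𝓒, Finset.insert_subset_insert A h𝓐𝓒,
      Finset.forall_mem_insert _ _ _ |>.mpr ⟨hAcyc, h𝓒⟩, hdec.insert hAcyc.edgeSet_nonempty hAH⟩

theorem exists_isCycle_odd_length (hH : H.HasEvenDegrees) (hodd : Odd H.edgeSet.ncard) :
    ∃ (v : V) (c : G.Walk v v), c.IsCycle ∧ Odd c.length ∧ c.edgeSet ⊆ H.edgeSet := by
  obtain ⟨𝓒, h𝓒, hdec⟩ := hH.exists_cycleDecomposition
  obtain ⟨C, hC, hCodd⟩ : ∃ C ∈ 𝓒, Odd C.edgeSet.ncard := by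
    by_contra! hall
    rw [hdec.ncard_eq_sum, ← Nat.not_even_iff_odd] at hodd
    exact hodd (Finset.even_sum _ fun C hC => Nat.not_odd_iff_even.mp (hall C hC))
  obtain ⟨v, c, hc, rfl⟩ := h𝓒 C hC
  rw [Walk.edgeSet_toSubgraph, hc.isTrail.ncard_edgeSet] at hCodd
  exact ⟨v, c, hc, hCodd, Walk.edgeSet_toSubgraph c ▸ hdec.edgeSet_subset hC⟩

end Subgraph.HasEvenDegrees

end Decomposition

end SimpleGraph

open scoped Classical in
theorem HasKEdgeDisjointOddCircuits.exists_finset_isCycleSubgraph {V : Type*}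
    {G : SimpleGraph V} {k : ℕ} (h : HasKEdgeDisjointOddCircuits G k) :
    ∃ 𝓐 : Finset G.Subgraph, (∀ A ∈ 𝓐, G.IsCycleSubgraph A) ∧
      (𝓐 : Set G.Subgraph).PairwiseDisjoint Subgraph.edgeSet ∧
      ∑ A ∈ 𝓐, A.edgeSet.ncard % 2 = k := by
  obtain ⟨u, c, hcyc, hodd, hdisj⟩ := h
  have hC (i : Fin k) : G.IsCycleSubgraph (c i).toSubgraph := ⟨u i, c i, hcyc i, rfl⟩
  have hdisj' : Pairwise fun i j => Disjoint (c i).toSubgraph.edgeSet (c j).toSubgraph.edgeSet :=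
    fun i j hij => Set.disjoint_left.mpr fun e hi hj => by
      rw [Walk.edgeSet_toSubgraph, Walk.mem_edgeSet] at hi hj
      exact hdisj i j hij e hi hj
  have hinj : Function.Injective fun i => (c i).toSubgraph := by
    intro i j (hij : (c i).toSubgraph = (c j).toSubgraph)
    by_contra hne
    obtain ⟨e, he⟩ := (hC i).edgeSet_nonempty
    exact Set.disjoint_left.mp (hdisj' hne) he (hij ▸ he)
  refine ⟨Finset.univ.image fun i => (c i).toSubgraph, by simpa using hC, ?_, ?_⟩
  · rw [Finset.coe_image, Finset.coe_univ, Set.image_univ]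
    rintro _ ⟨i, rfl⟩ _ ⟨j, rfl⟩ hij
    exact hdisj' fun h => hij (h ▸ rfl)
  · rw [Finset.sum_image hinj.injOn]
    simp [Walk.edgeSet_toSubgraph, (hcyc _).isTrail.ncard_edgeSet, Nat.odd_iff.mp (hodd _)]

/-- An eulerian graph `G` with `k ≡ |E(G)| (mod 2)` admits a `k`-odd decomposition
iff it contains at least `k` pairwise edge-disjoint odd circuits. -/
theorem eulerian_kOddDecomposition_iff {V : Type*} [Fintype V] (G : SimpleGraph V)
    (hconn : G.Connected) (heven : ∀ v : V, Even ((G.neighborSet v).ncard))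
    (k : ℕ) (hk : 0 < k) (hpar : k % 2 = G.edgeSet.ncard % 2) :
    (∃ D : Fin k → G.Subgraph, IsKOddDecomposition G k D) ↔
      HasKEdgeDisjointOddCircuits G k := by
  constructor
  · rintro ⟨D, heul, hodd, hdisj, -⟩
    choose u c hc hcodd hcD using fun i =>
      (heul i).hasEvenDegrees.exists_isCycle_odd_length (hodd i)
    exact ⟨u, c, hc, hcodd, fun i j hij e hi hj =>
      Set.disjoint_left.mp (hdisj i j hij) (hcD i hi) (hcD j hj)⟩
  · intro hcirc
    obtain ⟨𝓐, h𝓐, hdisj, hsum⟩ := hcirc.exists_finset_isCycleSubgraph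
    have htop : (⊤ : G.Subgraph).HasEvenDegrees := heven
    obtain ⟨𝓒, h𝓐𝓒, h𝓒, hdec⟩ := htop.exists_cycleDecomposition_superset
      (fun A hA => ⟨h𝓐 A hA, Subgraph.edgeSet_mono le_top⟩) hdisj
    rw [Subgraph.edgeSet_top] at hdec
    exact hdec.exists_isKOddDecomposition hconn hk hpar (fun C hC => (h𝓒 C hC).isEulerianSubgraph)
      (hsum ▸ Finset.sum_le_sum_of_subset h𝓐𝓒)
end

section
/- Let G be a finite connected 2d-regular simple graph with an odd number of vertices, where d ≥ 1. Then for every integer k with 1 ≤ k ≤ d and k ≡ d (mod 2), the graph G admits a k-odd decomposition. -/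
open SimpleGraph

/-!
Orient `G` so that every vertex has in-degree `d` and out-degree `d` (peel off closed trails);
Hall's theorem splits this orientation into `d` permutations, i.e. `G` into `d` edge-disjoint
2-factors. A 2-factor has `|V|` edges, an odd number, so one of its components is odd; the
components of all 2-factors partition `E(G)` into eulerian subgraphs, at least `d` of them odd.
The number of odd pieces of such a partition has the parity of `|E(G)| = d |V|`, that is of `k`.
Since `G` is connected, every piece shares a vertex with another one, and their union is again
eulerian: merging an even piece into a neighbour keeps the number of odd pieces, merging two odd
pieces lowers it by two, so we can merge down to exactly `k` pieces, all of them odd.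
-/

lemma List.Nodup.ncard_setOf_mem {α β : Type*} [DecidableEq α] {L : List (α × β)} (hL : L.Nodup)
    (a : α) : {b | (a, b) ∈ L}.ncard = (L.map Prod.fst).count a := by
  induction L with
  | nil => simp
  | cons p L ih =>
    obtain ⟨hp, hL'⟩ := List.nodup_cons.mp hL
    have hfin : {b | (a, b) ∈ L}.Finite :=
      (L.map Prod.snd).finite_toSet.subset fun b hb => List.mem_map.2 ⟨_, hb, rfl⟩
    by_cases hpa : p.1 = a
    · obtain ⟨c, d⟩ := p
      subst hpa
      have : {b | (c, b) ∈ (c, d) :: L} = insert d {b | (c, b) ∈ L} := by ext; simp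
      rw [this, Set.ncard_insert_of_notMem (show d ∉ {b | (c, b) ∈ L} from hp) hfin, ih hL']
      simp
    · have : {b | (a, b) ∈ p :: L} = {b | (a, b) ∈ L} := by
        ext b
        simp only [List.mem_cons, Set.mem_ofPred_eq, or_iff_right_iff_imp]
        rintro rfl
        exact (hpa rfl).elim
      simp only [this, ih hL', List.map_cons, List.count_cons, beq_iff_eq, hpa, if_false]
      rfl

namespace Finset

variable {α : Type*} [DecidableEq α] {s : Finset α} {a b : α}

lemma card_insert_erase_erase_lt (ha : a ∈ s) (hb : b ∈ s.erase a) (c : α) :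
    #(insert c ((s.erase a).erase b)) < #s := by
  have := card_insert_le c ((s.erase a).erase b)
  have := card_erase_add_one ha
  have := card_erase_add_one hb
  omega

lemma card_filter_le_card_filter_insert_erase_erase (p : α → Prop) [DecidablePred p] (ha : a ∈ s)
    (hb : b ∈ s.erase a) (c : α) :
    #(s.filter p) ≤ #((insert c ((s.erase a).erase b)).filter p) +
      (if p a then 1 else 0) + (if p b then 1 else 0) := by
  have hmono := card_le_card (filter_subset_filter p (subset_insert c ((s.erase a).erase b)))
  have hcount : #(s.filter p) =
      #(((s.erase a).erase b).filter p) + (if p a then 1 else 0) + (if p b then 1 else 0) := by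
    simp only [card_filter]
    rw [← sum_erase_add _ _ ha, ← sum_erase_add _ _ hb]
    ring
  omega

end Finset

namespace Digraph

variable {V : Type*} {O O₁ O₂ : Digraph V} {G G₁ G₂ : SimpleGraph V}

structure IsOrientation (O : Digraph V) (G : SimpleGraph V) : Prop where
  toSimpleGraphInclusive_eq : O.toSimpleGraphInclusive = G
  asymm : ∀ ⦃a b⦄, O.Adj a b → ¬ O.Adj b a

def IsBalanced (O : Digraph V) : Prop :=
  ∀ v, {w | O.Adj v w}.ncard = {w | O.Adj w v}.ncard

lemma IsOrientation.adj_iff (hO : O.IsOrientation G) {a b : V} :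
    G.Adj a b ↔ O.Adj a b ∨ O.Adj b a := by
  rw [← hO.toSimpleGraphInclusive_eq, toSimpleGraphInclusive, fromRel_adj, and_iff_right_iff_imp]
  rintro (h | h) rfl <;> exact hO.asymm h h

lemma IsOrientation.adj (hO : O.IsOrientation G) {a b : V} (h : O.Adj a b) : G.Adj a b :=
  hO.adj_iff.2 (.inl h)

lemma IsOrientation.ncard_add_ncard [Finite V] (hO : O.IsOrientation G) (a : V) :
    {b | O.Adj a b}.ncard + {b | O.Adj b a}.ncard = (G.neighborSet a).ncard := by
  rw [← Set.ncard_union_eq (s := {b | O.Adj a b}) (t := {b | O.Adj b a})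
    (Set.disjoint_left.2 fun b hab hba => hO.asymm hab hba)]
  congr 1
  ext b
  simp [hO.adj_iff]

lemma IsOrientation.sup (h₁ : O₁.IsOrientation G₁) (h₂ : O₂.IsOrientation G₂)
    (hG : Disjoint G₁ G₂) : (O₁ ⊔ O₂).IsOrientation (G₁ ⊔ G₂) where
  toSimpleGraphInclusive_eq := by
    ext a b
    simp only [toSimpleGraphInclusive, fromRel_adj, sup_adj, SimpleGraph.sup_adj,
      ← h₁.toSimpleGraphInclusive_eq, ← h₂.toSimpleGraphInclusive_eq]
    tauto
  asymm a b hab hba := by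
    rcases hab with hab | hab <;> rcases hba with hba | hba
    · exact h₁.asymm hab hba
    · exact disjoint_left.1 hG a b (h₁.adj hab) (h₂.adj hba).symm
    · exact disjoint_left.1 hG a b (h₁.adj hba).symm (h₂.adj hab)
    · exact h₂.asymm hab hba

lemma IsBalanced.sup [Finite V] (h₁ : O₁.IsBalanced) (h₂ : O₂.IsBalanced)
    (hO : ∀ ⦃a b⦄, O₁.Adj a b → ¬ O₂.Adj a b) : (O₁ ⊔ O₂).IsBalanced := by
  intro v
  have hout : Disjoint {b | O₁.Adj v b} {b | O₂.Adj v b} :=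
    Set.disjoint_left.2 fun _ h₁ h₂ => hO h₁ h₂
  have hin : Disjoint {b | O₁.Adj b v} {b | O₂.Adj b v} :=
    Set.disjoint_left.2 fun _ h₁ h₂ => hO h₁ h₂
  simp only [sup_adj, Set.ofPred_or]
  rw [Set.ncard_union_eq hout, Set.ncard_union_eq hin, h₁ v, h₂ v]

open Finset in
lemma exists_perm_forall_adj_of_regular [Finite V] {r : ℕ} (hr : r ≠ 0)
    (hout : ∀ v, {w | O.Adj v w}.ncard = r) (hin : ∀ v, {w | O.Adj w v}.ncard = r) :
    ∃ σ : Equiv.Perm V, ∀ v, O.Adj v (σ v) := by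
  classical
  have := Fintype.ofFinite V
  have hout' : ∀ v, #{w | O.Adj v w} = r := fun v => by
    simpa [← Set.ncard_coe_finset] using hout v
  have hin' : ∀ v, #{w | O.Adj w v} = r := fun v => by
    simpa [← Set.ncard_coe_finset] using hin v
  -- Hall's condition, by double counting the arcs leaving `s`.
  have hall : ∀ s : Finset V, #s ≤ #(s.biUnion fun v => {w | O.Adj v w}) := by
    intro s
    refine Nat.le_of_mul_le_mul_right (card_mul_le_card_mul O.Adj (fun a ha => ?_) fun b _ => ?_)
      (Nat.pos_of_ne_zero hr)
    · rw [← hout' a]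
      exact card_le_card fun w hw => by
        simp only [mem_filter, mem_univ, true_and] at hw
        exact mem_filter.2 ⟨mem_biUnion.2 ⟨a, ha, by simpa using hw⟩, hw⟩
    · rw [← hin' b]
      exact card_le_card fun w hw => by simp [(mem_filter.1 hw).2]
  obtain ⟨f, hf, hfO⟩ := (all_card_le_biUnion_card_iff_exists_injective _).1 hall
  exact ⟨Equiv.ofBijective f (Finite.injective_iff_bijective.1 hf), fun v => by simpa using hfO v⟩

theorem exists_perms_of_regular [Finite V] (r : ℕ) (O : Digraph V)
    (hout : ∀ v, {w | O.Adj v w}.ncard = r) (hin : ∀ v, {w | O.Adj w v}.ncard = r) :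
    ∃ σ : Fin r → Equiv.Perm V,
      (∀ u v, O.Adj u v ↔ ∃ i, σ i u = v) ∧ Pairwise fun i j => ∀ v, σ i v ≠ σ j v := by
  induction r generalizing O with
  | zero =>
    refine ⟨finZeroElim, fun u v => ?_, fun i => i.elim0⟩
    have : {w | O.Adj u w} = ∅ := (Set.ncard_eq_zero (Set.toFinite _)).1 (hout u)
    simpa using Set.eq_empty_iff_forall_notMem.1 this v
  | succ r ih =>
    obtain ⟨σ₀, hσ₀⟩ := exists_perm_forall_adj_of_regular r.succ_ne_zero hout hin
    let O' : Digraph V := { Adj u v := O.Adj u v ∧ σ₀ u ≠ v }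
    have hout' : ∀ v, {w | O'.Adj v w}.ncard = r := fun v => by
      have : {w | O'.Adj v w} = {w | O.Adj v w} \ {σ₀ v} := by
        ext w; simp [O', eq_comm]
      rw [this, Set.ncard_sdiff_singleton_of_mem (s := {w | O.Adj v w}) (hσ₀ v), hout v,
        Nat.add_sub_cancel]
    have hin' : ∀ v, {w | O'.Adj w v}.ncard = r := fun v => by
      have : {w | O'.Adj w v} = {w | O.Adj w v} \ {σ₀.symm v} := by
        ext w; simp [O', Equiv.eq_symm_apply]
      rw [this, Set.ncard_sdiff_singleton_of_mem (s := {w | O.Adj w v})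
        (by simpa using hσ₀ (σ₀.symm v)), hin v, Nat.add_sub_cancel]
    obtain ⟨τ, hτ, hτdisj⟩ := ih O' hout' hin'
    refine ⟨Fin.cons σ₀ τ, fun u v => ?_, ?_⟩
    · simp only [Fin.exists_fin_succ, Fin.cons_zero, Fin.cons_succ, ← hτ, O']
      constructor
      · intro h; by_cases h' : σ₀ u = v <;> tauto
      · rintro (rfl | h)
        exacts [hσ₀ u, h.1]
    · have hne : ∀ i v, σ₀ v ≠ τ i v := fun i v => ((hτ v _).2 ⟨i, rfl⟩).2
      intro i j hij v
      cases i using Fin.cases <;> cases j using Fin.cases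
      · exact absurd rfl hij
      · exact hne _ v
      · exact (hne _ v).symm
      · exact hτdisj (fun h => hij (congrArg Fin.succ h)) v

end Digraph

namespace SimpleGraph

variable {V : Type*} {G G₁ G₂ : SimpleGraph V}

namespace Walk

variable {u v : V}

def dartDigraph (w : G.Walk u v) : Digraph V where
  Adj a b := (a, b) ∈ w.darts.map Dart.toProd

lemma dartDigraph_adj_iff {w : G.Walk u v} {a b : V} :
    w.dartDigraph.Adj a b ↔ ∃ d ∈ w.darts, d.toProd = (a, b) :=
  List.mem_map

lemma fromEdgeSet_edges_le (w : G.Walk u v) : fromEdgeSet {e | e ∈ w.edges} ≤ G :=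
  fun _ _ h => w.adj_of_mem_edges h.1

lemma IsTrail.isOrientation_dartDigraph {w : G.Walk u v} (hw : w.IsTrail) :
    w.dartDigraph.IsOrientation (fromEdgeSet {e | e ∈ w.edges}) where
  toSimpleGraphInclusive_eq := by
    ext a b
    simp only [Digraph.toSimpleGraphInclusive, fromRel_adj, fromEdgeSet_adj, Set.mem_ofPred_eq,
      dartDigraph_adj_iff, edges, List.mem_map, dart_edge_eq_mk'_iff]
    constructor
    · rintro ⟨hab, ⟨d, hd, h⟩ | ⟨d, hd, h⟩⟩ <;> exact ⟨⟨d, hd, by simp [h]⟩, hab⟩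
    · rintro ⟨⟨d, hd, h | h⟩, hab⟩
      exacts [⟨hab, .inl ⟨d, hd, h⟩⟩, ⟨hab, .inr ⟨d, hd, h⟩⟩]
  asymm a b hab hba := by
    obtain ⟨d₁, hd₁, h₁⟩ := dartDigraph_adj_iff.1 hab
    obtain ⟨d₂, hd₂, h₂⟩ := dartDigraph_adj_iff.1 hba
    have : d₁ = d₂ := List.inj_on_of_nodup_map hw.edges_nodup hd₁ hd₂ <| by
      simp [Dart.edge, h₁, h₂, Sym2.eq_swap]
    subst this
    have hadj : G.Adj a b := by simpa [h₁] using d₁.adj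
    exact hadj.ne (Prod.ext_iff.1 (h₁.symm.trans h₂)).1

lemma IsTrail.ncard_dartDigraph_add [DecidableEq V] {w : G.Walk u v} (hw : w.IsTrail) (a : V) :
    {b | w.dartDigraph.Adj a b}.ncard + (if v = a then 1 else 0)
      = {b | w.dartDigraph.Adj b a}.ncard + (if u = a then 1 else 0) := by
  have hnodup : (w.darts.map Dart.toProd).Nodup :=
    (hw.edges_nodup.of_map _).map Dart.toProd_injective
  have hswap : ∀ b, w.dartDigraph.Adj b a ↔ (a, b) ∈ (w.darts.map Dart.toProd).map Prod.swap := by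
    intro b; simp [dartDigraph, Prod.swap_eq_iff_eq_swap]
  have hfst := congrArg (List.count a) w.map_fst_darts_append
  have hsnd := congrArg (List.count a) w.cons_tail_support
  rw [← w.map_snd_darts] at hsnd
  change {b | (a, b) ∈ w.darts.map Dart.toProd}.ncard + _ = _
  simp only [hswap]
  rw [hnodup.ncard_setOf_mem, (hnodup.map Prod.swap_injective).ncard_setOf_mem]
  simp only [List.map_map]
  simp only [List.count_append, List.count_cons, List.count_nil, beq_iff_eq, zero_add] at hfst hsnd
  exact hfst.trans hsnd.symm

end Walk

lemma ncard_neighborSet_sup [Finite V] (h : Disjoint G₁ G₂) (v : V) :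
    ((G₁ ⊔ G₂).neighborSet v).ncard = (G₁.neighborSet v).ncard + (G₂.neighborSet v).ncard := by
  rw [neighborSet_sup, Set.ncard_union_eq]
  exact Set.disjoint_left.2 fun b h₁ h₂ => disjoint_left.1 h v b h₁ h₂

theorem exists_isTrail_not_nil_of_even [Finite V] (heven : ∀ v, Even (G.neighborSet v).ncard)
    {u v : V} (huv : G.Adj u v) : ∃ w : G.Walk u u, w.IsTrail ∧ ¬ w.Nil := by
  classical
  have := Fintype.ofFinite V
  -- A longest trail ending at `u` starts at `u`: any other start would have odd degree in the
  -- trail, leaving an unused edge of `G` along which the trail extends.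
  set S := {n | ∃ x, ∃ w : G.Walk x u, w.IsTrail ∧ w.length = n}
  have hS : BddAbove S := ⟨G.edgeFinset.card, by
    rintro _ ⟨x, w, hw, rfl⟩
    exact hw.length_le_card_edgeFinset⟩
  have h1 : 1 ∈ S := ⟨v, .cons huv.symm .nil, by simp, rfl⟩
  obtain ⟨x, w, hw, hlen⟩ := Nat.sSup_mem ⟨1, h1⟩ hS
  obtain rfl : x = u := by
    by_contra hxu
    have hodd : Odd ((fromEdgeSet {e | e ∈ w.edges}).neighborSet x).ncard := by
      have hcount := hw.ncard_dartDigraph_add x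
      rw [if_neg (Ne.symm hxu), if_pos rfl] at hcount
      rw [← hw.isOrientation_dartDigraph.ncard_add_ncard]
      exact ⟨{b | w.dartDigraph.Adj b x}.ncard, by omega⟩
    obtain ⟨y, hxy, hy⟩ : ∃ y, G.Adj x y ∧ s(x, y) ∉ w.edges := by
      by_contra! h
      have : (fromEdgeSet {e | e ∈ w.edges}).neighborSet x = G.neighborSet x := by
        ext y
        exact ⟨fun hy => w.fromEdgeSet_edges_le hy, fun hy => ⟨h y hy, hy.ne⟩⟩
      exact (Nat.not_even_iff_odd.2 hodd) (this ▸ heven x)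
    have hlong : sSup S + 1 ∈ S :=
      ⟨y, .cons hxy.symm w, (Walk.isTrail_cons _ _).2 ⟨hw, by rwa [Sym2.eq_swap]⟩, by simp [hlen]⟩
    exact (le_csSup hS hlong).not_gt (Nat.lt_succ_self _)
  refine ⟨w, hw, Walk.not_nil_iff_lt_length.2 ?_⟩
  have := le_csSup hS h1
  omega

theorem exists_isOrientation_isBalanced [Finite V] (G : SimpleGraph V)
    (heven : ∀ v, Even (G.neighborSet v).ncard) :
    ∃ O : Digraph V, O.IsOrientation G ∧ O.IsBalanced := by
  induction hn : G.edgeSet.ncard using Nat.strong_induction_on generalizing G with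
  | _ n ih =>
  classical
  by_cases hG : G = ⊥
  · subst hG
    exact ⟨⊥, ⟨Digraph.toSimpleGraphInclusive_bot, fun _ _ h => h.elim⟩, fun _ => rfl⟩
  obtain ⟨u, v, huv⟩ : ∃ u v, G.Adj u v := by
    by_contra! h
    exact hG (eq_bot_iff.2 fun a b hab => h a b hab)
  obtain ⟨w, hw, hnil⟩ := exists_isTrail_not_nil_of_even heven huv
  set W := fromEdgeSet {e | e ∈ w.edges}
  have hWG : W ≤ G := w.fromEdgeSet_edges_le
  have hT := hw.isOrientation_dartDigraph
  have hTbal : w.dartDigraph.IsBalanced := fun a => by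
    simpa using hw.ncard_dartDigraph_add a
  have hdisj : Disjoint (G \ W) W := disjoint_sdiff_self_left
  have hsup : G \ W ⊔ W = G := sdiff_sup_cancel hWG
  have heven' : ∀ a, Even ((G \ W).neighborSet a).ncard := by
    intro a
    have hdeg := ncard_neighborSet_sup hdisj a
    rw [hsup, ← hT.ncard_add_ncard, ← hTbal a] at hdeg
    have := heven a
    rw [hdeg, Nat.even_add] at this
    exact this.2 ⟨_, rfl⟩
  have hlt : (G \ W).edgeSet.ncard < n := by
    rw [← hn, edgeSet_sdiff]
    have hWe : s(u, w.snd) ∈ W.edgeSet := ⟨w.mk_start_snd_mem_edges hnil, (w.adj_snd hnil).ne⟩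
    exact Set.ncard_lt_ncard (Set.sdiff_ssubset_left_iff.2 ⟨_, edgeSet_mono hWG hWe, hWe⟩)
  obtain ⟨O, hO, hObal⟩ := ih _ hlt (G \ W) heven' rfl
  have hOT := hO.sup hT hdisj
  rw [hsup] at hOT
  exact ⟨_, hOT, hObal.sup hTbal fun a b hO' hT' =>
    disjoint_left.1 hdisj a b (hO.adj hO') (hT.adj hT')⟩

lemma two_mul_ncard_edgeSet_of_regular [Fintype V] {r : ℕ}
    (hreg : ∀ v, (G.neighborSet v).ncard = r) : 2 * G.edgeSet.ncard = r * Fintype.card V := by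
  classical
  have hdeg : ∀ v, G.degree v = r := fun v => by
    rw [← card_neighborSet_eq_degree, ← Nat.card_eq_fintype_card, Nat.card_coe_set_eq, hreg]
  rw [Set.ncard_eq_toFinset_card', ← edgeFinset, ← sum_degrees_eq_twice_card_edges]
  simp [hdeg, mul_comm]

lemma ncard_neighborSet_fromRel_perm {σ : Equiv.Perm V} (hσ : ∀ v, σ v ≠ v)
    (hσσ : ∀ v, σ (σ v) ≠ v) (v : V) :
    ((fromRel fun a b => σ a = b).neighborSet v).ncard = 2 := by
  have : (fromRel fun a b => σ a = b).neighborSet v = {σ v, σ.symm v} := by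
    ext w
    simp only [mem_neighborSet, fromRel_adj, Set.mem_insert_iff, Set.mem_singleton_iff,
      Equiv.eq_symm_apply]
    constructor
    · rintro ⟨-, h | h⟩ <;> simp [h]
    · rintro (rfl | rfl)
      exacts [⟨(hσ v).symm, .inl rfl⟩, ⟨hσ w, .inr rfl⟩]
  rw [this, Set.ncard_pair]
  intro h
  exact hσσ v (by rw [h, Equiv.apply_symm_apply])

theorem exists_twoFactorization [Finite V] {d : ℕ} (hreg : ∀ v, (G.neighborSet v).ncard = 2 * d) :
    ∃ F : Fin d → SimpleGraph V, (∀ i v, ((F i).neighborSet v).ncard = 2) ∧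
      Pairwise (fun i j => Disjoint (F i) (F j)) ∧ ⨆ i, F i = G := by
  obtain ⟨O, hO, hbal⟩ := exists_isOrientation_isBalanced G fun v => (hreg v).symm ▸ even_two_mul d
  have hdeg : ∀ v, {w | O.Adj v w}.ncard = d ∧ {w | O.Adj w v}.ncard = d := fun v => by
    have := hO.ncard_add_ncard v
    have := hbal v
    have := hreg v
    constructor <;> omega
  obtain ⟨σ, hσO, hσdisj⟩ :=
    Digraph.exists_perms_of_regular d O (fun v => (hdeg v).1) fun v => (hdeg v).2
  have hadj : ∀ i v, O.Adj v (σ i v) := fun i v => (hσO _ _).2 ⟨i, rfl⟩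
  have hne : ∀ i v, σ i v ≠ v := fun i v h => by
    have := hadj i v
    rw [h] at this
    exact hO.asymm this this
  have hne₂ : ∀ i v, σ i (σ i v) ≠ v := fun i v h => by
    have := hadj i (σ i v)
    rw [h] at this
    exact hO.asymm (hadj i v) this
  refine ⟨fun i => fromRel fun a b => σ i a = b,
    fun i => ncard_neighborSet_fromRel_perm (hne i) (hne₂ i), fun i j hij => ?_, ?_⟩
  · refine disjoint_left.2 fun a b hi hj => ?_
    simp only [fromRel_adj] at hi hj
    rcases hi with ⟨-, hi | hi⟩ <;> rcases hj with ⟨-, hj | hj⟩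
    · exact hσdisj hij a (hi.trans hj.symm)
    · exact hO.asymm (hi ▸ hadj i a) (hj ▸ hadj j b)
    · exact hO.asymm (hj ▸ hadj j a) (hi ▸ hadj i b)
    · exact hσdisj hij b (hi.trans hj.symm)
  · ext a b
    simp only [iSup_adj, fromRel_adj, hO.adj_iff, hσO]
    constructor
    · rintro ⟨i, -, h | h⟩
      exacts [.inl ⟨i, h⟩, .inr ⟨i, h⟩]
    · rintro (⟨i, h⟩ | ⟨i, h⟩)
      exacts [⟨i, h ▸ (hne i a).symm, .inl h⟩, ⟨i, h ▸ hne i b, .inr h⟩]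

namespace ConnectedComponent

variable {F : SimpleGraph V}

def subgraphOfLE (hFG : F ≤ G) (C : F.ConnectedComponent) : G.Subgraph :=
  (SimpleGraph.toSubgraph F hFG).induce C.supp

variable {hFG : F ≤ G} {C : F.ConnectedComponent}

lemma subgraphOfLE_adj {a b : V} : (C.subgraphOfLE hFG).Adj a b ↔ a ∈ C.supp ∧ F.Adj a b := by
  simp only [subgraphOfLE, Subgraph.induce_adj, mem_supp_iff]
  constructor
  · exact fun ⟨ha, _, hab⟩ => ⟨ha, hab⟩
  · exact fun ⟨ha, hab⟩ => ⟨ha, (connectedComponentMk_eq_of_adj hab).symm.trans ha, hab⟩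

lemma connected_subgraphOfLE : (C.subgraphOfLE hFG).Connected := by
  have hcoe : (C.subgraphOfLE hFG).coe = C.toSimpleGraph := by
    ext ⟨a, ha⟩ ⟨b, hb⟩
    exact ⟨fun h => h.2.2, fun h => ⟨ha, hb, h⟩⟩
  exact ⟨hcoe ▸ C.connected_toSimpleGraph⟩

lemma neighborSet_subgraphOfLE {a : V} (ha : a ∈ C.supp) :
    (C.subgraphOfLE hFG).neighborSet a = F.neighborSet a := by
  ext b
  simp [subgraphOfLE_adj, ha]

end ConnectedComponent

end SimpleGraph

section EulerianPartition

open Finset SimpleGraph.ConnectedComponent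

variable {V : Type*} {G : SimpleGraph V}

lemma IsEulerianSubgraph.even_ncard_neighborSet {H : G.Subgraph} (hH : IsEulerianSubgraph G H)
    (v : V) : Even (H.neighborSet v).ncard := by
  by_cases hv : v ∈ H.verts
  · exact hH.2 v hv
  · have : H.neighborSet v = ∅ := Set.eq_empty_of_forall_notMem fun w hw => hv (H.edge_vert hw)
    simp [this]

lemma IsEulerianSubgraph.sup_s1 [Finite V] {X Y : G.Subgraph} (hX : IsEulerianSubgraph G X)
    (hY : IsEulerianSubgraph G Y) (hXY : Disjoint X.edgeSet Y.edgeSet)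
    (htouch : (X.verts ∩ Y.verts).Nonempty) : IsEulerianSubgraph G (X ⊔ Y) := by
  refine ⟨Subgraph.connected_sup hX.1.preconnected hY.1.preconnected htouch, fun v _ => ?_⟩
  rw [Subgraph.neighborSet_sup, Set.ncard_union_eq (s := X.neighborSet v) (t := Y.neighborSet v)
    (Set.disjoint_left.2 fun w hX hY =>
      Set.disjoint_left.1 hXY (Subgraph.mem_edgeSet.2 hX) (Subgraph.mem_edgeSet.2 hY))]
  exact (hX.even_ncard_neighborSet v).add (hY.even_ncard_neighborSet v)

structure IsEulerianPartition (G : SimpleGraph V) (P : Finset G.Subgraph) (E : Set (Sym2 V)) :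
    Prop where
  isEulerianSubgraph : ∀ H ∈ P, IsEulerianSubgraph G H
  edgeSet_nonempty : ∀ H ∈ P, H.edgeSet.Nonempty
  pairwiseDisjoint : (P : Set G.Subgraph).PairwiseDisjoint Subgraph.edgeSet
  biUnion_edgeSet : ⋃ H ∈ P, H.edgeSet = E

theorem exists_isEulerianPartition_of_even [Finite V] {F : SimpleGraph V} (hFG : F ≤ G)
    (heven : ∀ v, Even (F.neighborSet v).ncard) : ∃ P, IsEulerianPartition G P F.edgeSet := by
  classical
  have hfin := Set.finite_range fun C : F.ConnectedComponent => C.subgraphOfLE hFG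
  have hmem : ∀ H, H ∈ hfin.toFinset.filter (·.edgeSet.Nonempty) ↔
      (∃ C : F.ConnectedComponent, C.subgraphOfLE hFG = H) ∧ H.edgeSet.Nonempty := by
    simp
  refine ⟨hfin.toFinset.filter (·.edgeSet.Nonempty), ⟨?_, fun H hH => ((hmem H).1 hH).2, ?_, ?_⟩⟩
  · rintro _ hH
    obtain ⟨⟨C, rfl⟩, -⟩ := (hmem _).1 hH
    exact ⟨connected_subgraphOfLE, fun a ha => neighborSet_subgraphOfLE ha ▸ heven a⟩
  · rintro _ hH _ hK hne
    obtain ⟨⟨C, rfl⟩, -⟩ := (hmem _).1 hH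
    obtain ⟨⟨C', rfl⟩, -⟩ := (hmem _).1 hK
    refine Set.disjoint_left.2 fun e he he' => hne ?_
    induction e using Sym2.ind with
    | _ a b =>
      rw [Subgraph.mem_edgeSet, subgraphOfLE_adj, mem_supp_iff] at he he'
      rw [← he.1, he'.1]
  · ext e
    induction e using Sym2.ind with
    | _ a b =>
      simp only [Set.mem_iUnion, hmem, exists_prop, Subgraph.mem_edgeSet, mem_edgeSet]
      constructor
      · rintro ⟨_, ⟨⟨C, rfl⟩, -⟩, h⟩
        exact (subgraphOfLE_adj.1 h).2
      · intro hab
        have h : ((F.connectedComponentMk a).subgraphOfLE hFG).Adj a b :=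
          subgraphOfLE_adj.2 ⟨rfl, hab⟩
        exact ⟨_, ⟨⟨_, rfl⟩, ⟨_, Subgraph.mem_edgeSet.2 h⟩⟩, h⟩

namespace IsEulerianPartition

variable {P : Finset G.Subgraph} {E : Set (Sym2 V)}

lemma ncard_eq_sum [Finite V] (hP : IsEulerianPartition G P E) :
    E.ncard = ∑ H ∈ P, H.edgeSet.ncard := by
  rw [← hP.biUnion_edgeSet, ← set_biUnion_coe, P.finite_toSet.ncard_biUnion
    (fun _ _ => Set.toFinite _) hP.pairwiseDisjoint, finsum_mem_coe_finset]

lemma even_card_odd_iff [Finite V] (hP : IsEulerianPartition G P E) :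
    Even #{H ∈ P | Odd H.edgeSet.ncard} ↔ Even E.ncard := by
  rw [hP.ncard_eq_sum, even_sum_iff_even_card_odd]

lemma exists_odd [Finite V] (hP : IsEulerianPartition G P E) (hE : Odd E.ncard) :
    ∃ H ∈ P, Odd H.edgeSet.ncard := by
  by_contra! h
  rw [← Nat.not_even_iff_odd, ← hP.even_card_odd_iff, filter_false_of_mem h] at hE
  exact hE (by simp)

lemma disjoint {Q : Finset G.Subgraph} {E' : Set (Sym2 V)} (hP : IsEulerianPartition G P E)
    (hQ : IsEulerianPartition G Q E') (hE : Disjoint E E') : Disjoint P Q := by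
  refine Finset.disjoint_left.2 fun H hHP hHQ => ?_
  obtain ⟨e, he⟩ := hP.edgeSet_nonempty H hHP
  have heE : e ∈ E := hP.biUnion_edgeSet ▸ Set.mem_iUnion₂.2 ⟨H, hHP, he⟩
  have heE' : e ∈ E' := hQ.biUnion_edgeSet ▸ Set.mem_iUnion₂.2 ⟨H, hHQ, he⟩
  exact Set.disjoint_left.1 hE heE heE'

lemma biUnion [DecidableEq G.Subgraph] {ι : Type*} [Fintype ι] {P : ι → Finset G.Subgraph}
    {E : ι → Set (Sym2 V)} (hP : ∀ i, IsEulerianPartition G (P i) (E i))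
    (hE : Pairwise fun i j => Disjoint (E i) (E j)) :
    IsEulerianPartition G (univ.biUnion P) (⋃ i, E i) where
  isEulerianSubgraph H hH := by
    obtain ⟨i, -, hi⟩ := mem_biUnion.1 hH
    exact (hP i).isEulerianSubgraph H hi
  edgeSet_nonempty H hH := by
    obtain ⟨i, -, hi⟩ := mem_biUnion.1 hH
    exact (hP i).edgeSet_nonempty H hi
  pairwiseDisjoint H hH K hK hHK := by
    obtain ⟨i, -, hi⟩ := mem_biUnion.1 hH
    obtain ⟨j, -, hj⟩ := mem_biUnion.1 hK
    obtain rfl | hij := eq_or_ne i j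
    · exact (hP i).pairwiseDisjoint hi hj hHK
    · refine (hE hij).mono ?_ ?_
      · exact (hP i).biUnion_edgeSet ▸ Set.subset_biUnion_of_mem (u := Subgraph.edgeSet) hi
      · exact (hP j).biUnion_edgeSet ▸ Set.subset_biUnion_of_mem (u := Subgraph.edgeSet) hj
  biUnion_edgeSet := by
    ext e
    simp only [← (hP _).biUnion_edgeSet, Set.mem_iUnion, mem_biUnion, mem_univ, true_and]
    tauto

lemma card_le_card_odd_biUnion [DecidableEq G.Subgraph] {ι : Type*} [Fintype ι]
    {P : ι → Finset G.Subgraph} {E : ι → Set (Sym2 V)} (hP : ∀ i, IsEulerianPartition G (P i) (E i))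
    (hE : Pairwise fun i j => Disjoint (E i) (E j)) (hodd : ∀ i, ∃ H ∈ P i, Odd H.edgeSet.ncard) :
    Fintype.card ι ≤ #{H ∈ univ.biUnion P | Odd H.edgeSet.ncard} := by
  rw [filter_biUnion, card_biUnion fun i _ j _ hij =>
    disjoint_filter_filter ((hP i).disjoint (hP j) (hE hij))]
  calc Fintype.card ι = ∑ _ : ι, 1 := by simp
    _ ≤ _ := sum_le_sum fun i _ => card_pos.2 <| by
      obtain ⟨H, hH, hodd⟩ := hodd i
      exact ⟨H, mem_filter.2 ⟨hH, hodd⟩⟩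

lemma exists_touching (hG : G.Connected) (hP : IsEulerianPartition G P G.edgeSet)
    {X : G.Subgraph} (hX : X ∈ P) (hcard : 1 < #P) :
    ∃ Y ∈ P, Y ≠ X ∧ (X.verts ∩ Y.verts).Nonempty := by
  by_contra! hno
  have hclosed : ∀ v ∈ X.verts, ∀ w, G.Adj v w → X.Adj v w := by
    intro v hv w hvw
    rw [← G.mem_edgeSet, ← hP.biUnion_edgeSet, Set.mem_iUnion₂] at hvw
    obtain ⟨Z, hZ, he⟩ := hvw
    obtain rfl : Z = X := by
      by_contra hZX
      exact (hno Z hZ hZX).subset ⟨hv, Z.edge_vert (Subgraph.mem_edgeSet.1 he)⟩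
    exact he
  obtain ⟨v, hv⟩ := (hP.isEulerianSubgraph X hX).1.nonempty
  obtain ⟨Y, hY, hYX⟩ := exists_mem_ne hcard X
  obtain ⟨e, he⟩ := hP.edgeSet_nonempty Y hY
  induction e using Sym2.ind with
  | _ a b =>
    exact (hno Y hY hYX).subset
      ⟨(hG.preconnected v a).mem_subgraphVerts hclosed hv, Y.edge_vert (Subgraph.mem_edgeSet.1 he)⟩

lemma merge [Finite V] [DecidableEq G.Subgraph] (hP : IsEulerianPartition G P E) {X Y : G.Subgraph}
    (hX : X ∈ P) (hY : Y ∈ P) (hXY : X ≠ Y) (htouch : (X.verts ∩ Y.verts).Nonempty) :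
    IsEulerianPartition G (insert (X ⊔ Y) ((P.erase X).erase Y)) E := by
  have hdisj := hP.pairwiseDisjoint
  have hS : ∀ {H}, H ∈ (P.erase X).erase Y → H ∈ P ∧ H ≠ X ∧ H ≠ Y := fun hH => by
    simp only [mem_erase] at hH
    exact ⟨hH.2.2, hH.2.1, hH.1⟩
  refine ⟨?_, ?_, ?_, ?_⟩
  · simp only [forall_mem_insert]
    exact ⟨(hP.isEulerianSubgraph X hX).sup_s1 (hP.isEulerianSubgraph Y hY) (hdisj hX hY hXY) htouch,
      fun H hH => hP.isEulerianSubgraph H (hS hH).1⟩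
  · simp only [forall_mem_insert, Subgraph.edgeSet_sup]
    exact ⟨(hP.edgeSet_nonempty X hX).mono Set.subset_union_left,
      fun H hH => hP.edgeSet_nonempty H (hS hH).1⟩
  · rw [coe_insert]
    refine (hdisj.subset fun H hH => (hS hH).1).insert fun H hH _ => ?_
    obtain ⟨hHP, hHX, hHY⟩ := hS hH
    rw [Subgraph.edgeSet_sup, Set.disjoint_union_left]
    exact ⟨hdisj hX hHP hHX.symm, hdisj hY hHP hHY.symm⟩
  · have hP' : P = insert X (insert Y ((P.erase X).erase Y)) := by
      rw [insert_erase (mem_erase.2 ⟨hXY.symm, hY⟩), insert_erase hX]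
    rw [← hP.biUnion_edgeSet]
    conv_rhs => rw [hP']
    simp only [set_biUnion_insert, Subgraph.edgeSet_sup, Set.union_assoc]

theorem exists_card_eq_forall_odd [Finite V] [DecidableEq G.Subgraph] (hG : G.Connected)
    {k : ℕ} (hk : 0 < k) (hpar : Even k ↔ Even G.edgeSet.ncard)
    (hP : IsEulerianPartition G P G.edgeSet) (hkP : k ≤ #{H ∈ P | Odd H.edgeSet.ncard}) :
    ∃ Q, IsEulerianPartition G Q G.edgeSet ∧ #Q = k ∧ ∀ H ∈ Q, Odd H.edgeSet.ncard := by
  induction hn : #P using Nat.strong_induction_on generalizing P with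
  | _ n ih =>
  have hle : #{H ∈ P | Odd H.edgeSet.ncard} ≤ #P := card_filter_le _ _
  by_cases hPk : #P = k
  · refine ⟨P, hP, hPk, fun H hH => ?_⟩
    rw [← eq_of_subset_of_card_le (filter_subset (fun H : G.Subgraph => Odd H.edgeSet.ncard) P)
      (by omega)] at hH
    exact (mem_filter.1 hH).2
  -- Merge an even piece into a neighbour if there is one, and two odd pieces otherwise.
  obtain ⟨X, hX, hXodd⟩ : ∃ X ∈ P, ¬ Odd X.edgeSet.ncard ∨ ∀ H ∈ P, Odd H.edgeSet.ncard := by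
    by_cases h : ∀ H ∈ P, Odd H.edgeSet.ncard
    · obtain ⟨X, hX⟩ := card_pos.1 (show 0 < #P by omega)
      exact ⟨X, hX, .inr h⟩
    · push Not at h
      obtain ⟨X, hX, h⟩ := h
      exact ⟨X, hX, .inl h⟩
  obtain ⟨Y, hY, hYX, htouch⟩ := hP.exists_touching hG hX (by omega)
  have hYP : Y ∈ P.erase X := mem_erase.2 ⟨hYX, hY⟩
  have hP' := hP.merge hX hY hYX.symm htouch
  refine ih _ (hn ▸ card_insert_erase_erase_lt hX hYP _) hP' ?_ rfl
  have hcount := card_filter_le_card_filter_insert_erase_erase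
    (fun H : G.Subgraph => Odd H.edgeSet.ncard) hX hYP (X ⊔ Y)
  -- The number of odd pieces keeps the parity of `|E(G)|`.
  have hparP := hP.even_card_odd_iff
  have hparP' := hP'.even_card_odd_iff
  simp only [Nat.even_iff] at hpar hparP hparP'
  rcases hXodd with hXeven | hall
  · rw [if_neg hXeven] at hcount
    split_ifs at hcount <;> omega
  · rw [if_pos (hall X hX), if_pos (hall Y hY), filter_true_of_mem hall] at hcount
    rw [filter_true_of_mem hall] at hparP
    omega

lemma isKOddDecomposition {Q : Finset G.Subgraph} (hQ : IsEulerianPartition G Q G.edgeSet)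
    (hodd : ∀ H ∈ Q, Odd H.edgeSet.ncard) {k : ℕ} (e : Fin k ≃ Q) :
    IsKOddDecomposition G k fun i => e i := by
  refine ⟨fun i => hQ.isEulerianSubgraph _ (e i).2, fun i => hodd _ (e i).2,
    fun i j hij => hQ.pairwiseDisjoint (e i).2 (e j).2 fun h => hij (e.injective (Subtype.ext h)),
    ?_⟩
  rw [← hQ.biUnion_edgeSet]
  ext x
  simp only [Set.mem_iUnion]
  constructor
  · rintro ⟨i, hi⟩
    exact ⟨_, (e i).2, hi⟩
  · rintro ⟨H, hH, hx⟩
    exact ⟨e.symm ⟨H, hH⟩, by simpa using hx⟩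

end IsEulerianPartition

theorem exists_isEulerianPartition_le_card_odd [Fintype V] {d : ℕ}
    (hreg : ∀ v, (G.neighborSet v).ncard = 2 * d) (hodd : Odd (Fintype.card V)) :
    ∃ P, IsEulerianPartition G P G.edgeSet ∧ d ≤ #{H ∈ P | Odd H.edgeSet.ncard} := by
  classical
  obtain ⟨F, hF2, hFdisj, hFG⟩ := exists_twoFactorization hreg
  choose P hP using fun i => exists_isEulerianPartition_of_even (hFG ▸ le_iSup F i)
    fun v => (hF2 i v).symm ▸ even_two
  have hdisj : Pairwise fun i j => Disjoint (F i).edgeSet (F j).edgeSet :=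
    fun i j hij => disjoint_edgeSet.2 (hFdisj hij)
  have hFodd : ∀ i, Odd (F i).edgeSet.ncard := fun i => by
    have := two_mul_ncard_edgeSet_of_regular (hF2 i)
    rw [show (F i).edgeSet.ncard = Fintype.card V by omega]
    exact hodd
  refine ⟨univ.biUnion P, ?_, ?_⟩
  · simpa only [← edgeSet_iSup, hFG] using IsEulerianPartition.biUnion hP hdisj
  · simpa using IsEulerianPartition.card_le_card_odd_biUnion hP hdisj
      fun i => (hP i).exists_odd (hFodd i)

end EulerianPartition

theorem regular_oddOrder_kOddDecomposition_general {V : Type*} [Fintype V] (G : SimpleGraph V)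
    (d : ℕ) (hconn : G.Connected)
    (hreg : ∀ v : V, (G.neighborSet v).ncard = 2 * d)
    (hodd : Odd (Fintype.card V))
    (k : ℕ) (hk1 : 1 ≤ k) (hkd : k ≤ d) (hpar : k % 2 = d % 2) :
    ∃ D : Fin k → G.Subgraph, IsKOddDecomposition G k D := by
  classical
  obtain ⟨P, hP, hdP⟩ := exists_isEulerianPartition_le_card_odd hreg hodd
  have hE : G.edgeSet.ncard = d * Fintype.card V := by
    linarith [two_mul_ncard_edgeSet_of_regular hreg]
  have hkE : Even k ↔ Even G.edgeSet.ncard := by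
    rw [hE, Nat.even_mul, Nat.even_iff, Nat.even_iff, Nat.even_iff]
    have := Nat.odd_iff.1 hodd
    omega
  obtain ⟨Q, hQ, hQk, hQodd⟩ := hP.exists_card_eq_forall_odd hconn hk1 hkE (hkd.trans hdP)
  exact ⟨_, hQ.isKOddDecomposition hQodd (Q.equivFinOfCardEq hQk).symm⟩

/-- A connected `2d`-regular graph of odd order (`d ≥ 1`) admits a `k`-odd
decomposition for each `1 ≤ k ≤ d` with `k ≡ d (mod 2)`. -/
theorem regular_oddOrder_kOddDecomposition {V : Type*} [Fintype V] (G : SimpleGraph V)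
    (d : ℕ) (hd : 1 ≤ d) (hconn : G.Connected)
    (hreg : ∀ v : V, (G.neighborSet v).ncard = 2 * d)
    (hodd : Odd (Fintype.card V))
    (k : ℕ) (hk1 : 1 ≤ k) (hkd : k ≤ d) (hpar : k % 2 = d % 2) :
    ∃ D : Fin k → G.Subgraph, IsKOddDecomposition G k D :=
  regular_oddOrder_kOddDecomposition_general G d hconn hreg hodd k hk1 hkd hpar
end

section
/- Every finite connected 4-regular simple graph with an odd number of vertices admits a rooted decomposition into two odd closed trails, i.e., a rooted 2-odd decomposition. -/
/-!
A connected graph with all degrees even has an Euler circuit `p`; here its length is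
`|E(G)| = 2|V(G)|`. If some vertex occurs on `p` at two positions `i ≤ j` with `j - i` odd,
cutting `p` at these positions yields two edge-disjoint closed trails through that vertex, of odd
lengths `j - i` and `2|V(G)| - (j - i)`. Otherwise each vertex occurs only at positions of one
parity; since every edge is a step of `p`, colouring vertices by this parity makes `G` bipartite,
and a 4-regular bipartite graph has sides of equal size, so `|V(G)|` would be even.
-/

open SimpleGraph

/-- A rooted `k`-odd decomposition: a `k`-odd decomposition all of whose constituents
share a common vertex. -/
def IsRootedKOddDecomposition {V : Type*} (G : SimpleGraph V) (k : ℕ)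
    (D : Fin k → G.Subgraph) : Prop :=
  IsKOddDecomposition G k D ∧ ∃ v : V, ∀ i, v ∈ (D i).verts

namespace SimpleGraph

variable {V : Type*} {G : SimpleGraph V}

namespace Walk

theorem IsTrail.even_ncard_neighborSet_toSubgraph_iff [Finite V] {u v : V} {p : G.Walk u v}
    (hp : p.IsTrail) (x : V) :
    Even (p.toSubgraph.neighborSet x).ncard ↔ (u ≠ v → x ≠ u ∧ x ≠ v) := by
  classical
  have := Fintype.ofFinite V
  have hsub : ∀ e ∈ p.edges, e ∈ p.toSubgraph.spanningCoe.edgeSet := fun e he => by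
    simpa [Subgraph.edgeSet_spanningCoe, edgeSet_toSubgraph] using he
  have hq : (p.transfer _ hsub).IsEulerian :=
    IsTrail.isEulerian_of_forall_mem (by rw [isTrail_def, edges_transfer]; exact hp.edges_nodup)
      fun e he => by
        simpa [edges_transfer, Subgraph.edgeSet_spanningCoe, edgeSet_toSubgraph] using he
  rw [← hq.even_degree_iff, ← card_neighborSet_eq_degree, ← Nat.card_eq_fintype_card,
    Nat.card_coe_set_eq]
  rfl

theorem IsTrail.ncard_edgeSet_toSubgraph {u v : V} {p : G.Walk u v} (hp : p.IsTrail) :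
    p.toSubgraph.edgeSet.ncard = p.length := by
  classical
  rw [edgeSet_toSubgraph, Walk.edgeSet, ← List.coe_toFinset, Set.ncard_coe_finset,
    List.toFinset_card_of_nodup hp.edges_nodup, length_edges]

theorem IsEulerian.of_perm [DecidableEq V] {u v u' v' : V} {p : G.Walk u v} {q : G.Walk u' v'}
    (hp : p.IsEulerian) (h : q.edges.Perm p.edges) : q.IsEulerian := by
  intro e he
  rw [h.count_eq]
  exact hp e he

theorem exists_isTrail_forall_length_le [Finite V] [Nonempty V] (G : SimpleGraph V) :
    ∃ (u v : V) (p : G.Walk u v), p.IsTrail ∧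
      ∀ (u' v' : V) (q : G.Walk u' v'), q.IsTrail → q.length ≤ p.length := by
  classical
  have := Fintype.ofFinite V
  let S : Set ℕ := {n | ∃ (u v : V) (p : G.Walk u v), p.IsTrail ∧ p.length = n}
  have hbdd : BddAbove S := ⟨Fintype.card (Sym2 V), by
    rintro n ⟨u, v, p, hp, rfl⟩
    rw [← p.length_edges]
    exact hp.edges_nodup.length_le_card⟩
  obtain ⟨u, v, p, hp, hlen⟩ :=
    Nat.sSup_mem (s := S) ⟨0, Classical.arbitrary V, _, .nil, by simp, rfl⟩ hbdd
  exact ⟨u, v, p, hp, fun u' v' q hq => hlen ▸ le_csSup hbdd ⟨u', v', q, hq, rfl⟩⟩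

theorem exists_mem_support_adj_notMem_edges (hconn : G.Connected) {u v : V} (p : G.Walk u v)
    {e : Sym2 V} (he : e ∈ G.edgeSet) (hep : e ∉ p.edges) :
    ∃ x ∈ p.support, ∃ y, G.Adj x y ∧ s(x, y) ∉ p.edges := by
  induction e using Sym2.ind with
  | _ a b =>
  by_cases ha : a ∈ p.support
  · exact ⟨a, ha, b, he, hep⟩
  obtain ⟨w⟩ := hconn.preconnected u a
  obtain ⟨d, -, hd, hd'⟩ := w.exists_boundary_dart {x | x ∈ p.support} p.start_mem_support ha
  exact ⟨d.fst, hd, d.snd, d.adj, fun h => hd' (p.snd_mem_support_of_mem_edges h)⟩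

-- A longest trail is closed, since its start has even degree and all edges there are used;
-- being closed, it can be rotated to start at any of its vertices and then extended.
theorem exists_isEulerian [Finite V] [Nonempty V] [DecidableEq V] (hconn : G.Connected)
    (heven : ∀ v, Even (G.neighborSet v).ncard) : ∃ (u : V) (p : G.Walk u u), p.IsEulerian := by
  obtain ⟨u, v, p, hp, hmax⟩ := exists_isTrail_forall_length_le G
  have hlonger : ∀ {w x y} (q : G.Walk x w) (h : G.Adj y x), q.IsTrail → s(y, x) ∉ q.edges →
      q.length = p.length → False := fun q h hq hqe hlen => by
    have := hmax _ _ _ (hq.cons h hqe)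
    rw [length_cons] at this
    omega
  have hstart : p.toSubgraph.neighborSet u = G.neighborSet u := by
    ext y
    rw [Subgraph.mem_neighborSet, adj_toSubgraph_iff_mem_edges, mem_neighborSet]
    refine ⟨fun h => p.adj_of_mem_edges h, fun h => ?_⟩
    by_contra hy
    exact hlonger p h.symm hp (by rwa [Sym2.eq_swap]) rfl
  have huv : u = v := by
    by_contra huv
    have := (hp.even_ncard_neighborSet_toSubgraph_iff u).mp (hstart ▸ heven u) huv
    exact this.1 rfl
  subst huv
  refine ⟨u, p, hp.isEulerian_of_forall_mem fun e he => ?_⟩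
  by_contra hep
  obtain ⟨x, hx, y, hxy, hxyp⟩ := exists_mem_support_adj_notMem_edges hconn p he hep
  exact hlonger (p.rotate x hx) hxy.symm (hp.rotate hx)
    (by rwa [(p.rotate_edges x hx).perm.mem_iff, Sym2.eq_swap]) (length_rotate ..)

theorem exists_append_perm_of_getVert_eq {u : V} (p : G.Walk u u) {i j : ℕ} (hij : i ≤ j)
    (hj : j ≤ p.length) (hji : p.getVert j = p.getVert i) :
    ∃ q₁ q₂ : G.Walk (p.getVert i) (p.getVert i),
      q₁.length = j - i ∧ (q₁.append q₂).edges.Perm p.edges := by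
  let q₁ := ((p.drop i).take (j - i)).copy rfl
    (by rw [drop_getVert, Nat.add_sub_cancel' hij, hji])
  let q₂ := ((p.drop j).append (p.take i)).copy hji rfl
  refine ⟨q₁, q₂, ?_, ?_⟩
  · simp only [q₁, length_copy, take_length, drop_length]
    omega
  · simp only [q₁, q₂, edges_append, edges_copy, edges_take, edges_drop]
    have hsplit : (p.edges.drop i).take (j - i) ++ p.edges.drop j = p.edges.drop i := by
      rw [← Nat.add_sub_cancel' hij, ← List.drop_drop, Nat.add_sub_cancel_left,
        List.take_append_drop]
    rw [← List.append_assoc, hsplit]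
    exact List.perm_append_comm.trans (.of_eq (List.take_append_drop i p.edges))

theorem exists_isBipartiteWith_of_forall_getVert_eq {u v : V} (p : G.Walk u v)
    (hcover : ∀ e ∈ G.edgeSet, e ∈ p.edges)
    (hpar : ∀ i j, i ≤ j → j ≤ p.length → p.getVert j = p.getVert i → Even (j - i)) :
    ∃ s : Set V, G.IsBipartiteWith s sᶜ := by
  let S := {x | ∃ i ≤ p.length, p.getVert i = x ∧ Even i}
  have hmem : ∀ k ≤ p.length, p.getVert k ∈ S ↔ Even k := by
    refine fun k hk => ⟨fun ⟨i, hi, hik, heven⟩ => ?_, fun h => ⟨k, hk, rfl, h⟩⟩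
    rcases le_total i k with hle | hle
    · exact (Nat.even_sub hle).mp (hpar i k hle hk hik.symm) |>.mpr heven
    · exact (Nat.even_sub hle).mp (hpar k i hle hi hik) |>.mp heven
  have hstep : ∀ k < p.length, (p.getVert k ∈ S ↔ p.getVert (k + 1) ∉ S) := fun k hk => by
    rw [hmem k hk.le, hmem (k + 1) hk, Nat.even_add_one, not_not]
  refine ⟨S, disjoint_compl_right, fun a b hab => ?_⟩
  obtain ⟨k, hk, hkab⟩ := (mk_mem_edges_iff_exists p).mp (hcover _ hab)
  rcases Sym2.eq_iff.mp hkab with ⟨rfl, rfl⟩ | ⟨rfl, rfl⟩ <;>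
    · have := hstep k hk
      simp only [Set.mem_compl_iff]
      tauto

theorem IsEulerian.length_eq_card_edgeFinset [DecidableEq V] [Fintype G.edgeSet]
    {u v : V} {p : G.Walk u v} (hp : p.IsEulerian) : p.length = G.edgeFinset.card := by
  rw [← hp.edgesFinset_eq, ← length_edges]
  rfl

end Walk

theorem IsRegularOfDegree.even_card_of_isBipartiteWith [Fintype V] [DecidableRel G.Adj] {d : ℕ}
    (hG : G.IsRegularOfDegree d) (hd : d ≠ 0) {s : Set V} (h : G.IsBipartiteWith s sᶜ) :
    Even (Fintype.card V) := by
  classical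
  have hs : G.IsBipartiteWith ↑s.toFinset ↑s.toFinsetᶜ := by
    rwa [Finset.coe_compl, Set.coe_toFinset]
  have hsum := isBipartiteWith_sum_degrees_eq hs
  simp only [hG.degree_eq, Finset.sum_const, smul_eq_mul] at hsum
  rw [← Finset.card_add_card_compl s.toFinset,
    ← Nat.eq_of_mul_eq_mul_right (Nat.pos_of_ne_zero hd) hsum]
  exact ⟨_, rfl⟩

end SimpleGraph

theorem isRootedKOddDecomposition_two_of_isEulerian {V : Type*} [Finite V] [DecidableEq V]
    {G : SimpleGraph V} {x : V} {q₁ q₂ : G.Walk x x} (hq : (q₁.append q₂).IsEulerian)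
    (h₁ : Odd q₁.length) (h₂ : Odd q₂.length) :
    IsRootedKOddDecomposition G 2 ![q₁.toSubgraph, q₂.toSubgraph] := by
  obtain ⟨ht₁, ht₂, hdisj⟩ := (Walk.isTrail_append q₁ q₂).mp hq.isTrail
  have heulerian : ∀ q : G.Walk x x, q.IsTrail → IsEulerianSubgraph G q.toSubgraph :=
    fun q hq => ⟨q.toSubgraph_connected, fun v _ =>
      (hq.even_ncard_neighborSet_toSubgraph_iff v).mpr fun h => absurd rfl h⟩
  refine ⟨⟨?_, ?_, ?_, ?_⟩, x, ?_⟩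
  · simp only [Fin.forall_fin_two, Matrix.cons_val_zero, Matrix.cons_val_one]
    exact ⟨heulerian q₁ ht₁, heulerian q₂ ht₂⟩
  · simp only [Fin.forall_fin_two, Matrix.cons_val_zero, Matrix.cons_val_one,
      ht₁.ncard_edgeSet_toSubgraph, ht₂.ncard_edgeSet_toSubgraph]
    exact ⟨h₁, h₂⟩
  · have : Disjoint q₁.toSubgraph.edgeSet q₂.toSubgraph.edgeSet := by
      simpa [Walk.edgeSet_toSubgraph, Set.disjoint_left] using fun e h₁ h₂ => hdisj h₁ h₂
    simp only [Fin.forall_fin_two, Matrix.cons_val_zero, Matrix.cons_val_one]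
    exact ⟨⟨by simp, fun _ => this⟩, fun _ => this.symm, by simp⟩
  · ext e
    simp only [Set.mem_iUnion, Fin.exists_fin_two, Matrix.cons_val_zero, Matrix.cons_val_one,
      Walk.edgeSet_toSubgraph, Walk.mem_edgeSet, ← List.mem_append, ← Walk.edges_append,
      hq.mem_edges_iff]
  · simp [Fin.forall_fin_two]

/-- Theorem 1: every connected 4-regular graph of odd order has a rooted
decomposition into two odd closed trails. -/
theorem fourRegular_oddOrder_rooted2OddDecomposition {V : Type*} [Fintype V]
    (G : SimpleGraph V) (hconn : G.Connected)
    (hreg : ∀ v : V, (G.neighborSet v).ncard = 4)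
    (hodd : Odd (Fintype.card V)) :
    ∃ D : Fin 2 → G.Subgraph, IsRootedKOddDecomposition G 2 D := by
  classical
  have hreg4 : G.IsRegularOfDegree 4 := fun v => by
    rw [← card_neighborSet_eq_degree, ← Nat.card_eq_fintype_card, Nat.card_coe_set_eq, hreg v]
  have : Nonempty V := Fintype.card_pos_iff.mp hodd.pos
  obtain ⟨u, p, hp⟩ := Walk.exists_isEulerian hconn fun v => hreg v ▸ even_two_mul 2
  have hlen : Even p.length := by
    have := G.sum_degrees_eq_twice_card_edges
    simp only [hreg4.degree_eq, Finset.sum_const, smul_eq_mul, Finset.card_univ] at this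
    exact ⟨Fintype.card V, by rw [hp.length_eq_card_edgeFinset]; omega⟩
  obtain ⟨i, j, hij, hj, hji, hji_odd⟩ : ∃ i j, i ≤ j ∧ j ≤ p.length ∧
      p.getVert j = p.getVert i ∧ Odd (j - i) := by
    by_contra! h
    obtain ⟨s, hs⟩ := p.exists_isBipartiteWith_of_forall_getVert_eq
      (fun e he => hp.mem_edges_iff.mpr he)
      fun i j hij hj hji => Nat.not_odd_iff_even.mp (h i j hij hj hji)
    exact Nat.not_even_iff_odd.mpr hodd (hreg4.even_card_of_isBipartiteWith four_ne_zero hs)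
  obtain ⟨q₁, q₂, hlen₁, hperm⟩ := p.exists_append_perm_of_getVert_eq hij hj hji
  have hlen₂ : q₂.length = p.length - (j - i) := by
    have := hperm.length_eq
    simp only [Walk.length_edges, Walk.length_append] at this
    omega
  exact ⟨_, isRootedKOddDecomposition_two_of_isEulerian (hp.of_perm hperm) (hlen₁ ▸ hji_odd)
    (hlen₂ ▸ Nat.Even.sub_odd (by omega) hlen hji_odd)⟩
end

section
/- Let G be a finite signed eulerian graph (a finite connected simple graph with all degrees even, equipped with a signature assigning +1 or −1 to each edge) whose number of negative edges is odd, and suppose G contains two edge-disjoint unbalanced circuits. Then G contains at least three pairwise edge-disjoint unbalanced circuits. -/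
open SimpleGraph

/-- `G`, with signature `σ`, contains `k` pairwise edge-disjoint unbalanced circuits:
cycles carrying an odd number of negative (sign `-1`) edges. -/
def HasKEdgeDisjointUnbalancedCircuits {V : Type*} (G : SimpleGraph V)
    (σ : Sym2 V → ℤ) (k : ℕ) : Prop :=
  ∃ (u : Fin k → V) (c : (i : Fin k) → G.Walk (u i) (u i)),
    (∀ i, (c i).IsCycle) ∧
    (∀ i, Odd ((c i).edges.countP (fun e => decide (σ e = -1)))) ∧
    (∀ i j, i ≠ j → ∀ e, e ∈ (c i).edges → e ∉ (c j).edges)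

section Aux

variable {V : Type*}

open SimpleGraph Walk

private lemma aux_countP_zero [DecidableEq V] {G : SimpleGraph V} {u v x : V} (p : G.Walk u v)
    (hx : x ∉ p.support) : p.edges.countP (fun e => decide (x ∈ e)) = 0 := by
  rw [List.countP_eq_zero]
  intro e he
  simp only [decide_eq_true_eq]
  intro hxe
  obtain ⟨y, rfl⟩ := Sym2.mem_iff_exists.mp hxe
  exact hx (p.fst_mem_support_of_mem_edges he)

private lemma aux_countP_start [DecidableEq V] {G : SimpleGraph V} {u v : V} (p : G.Walk u v)
    (hp : p.IsPath) (hnn : ¬ p.Nil) : p.edges.countP (fun e => decide (u ∈ e)) = 1 := by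
  obtain ⟨y, h, q, rfl⟩ := Walk.not_nil_iff.mp hnn
  rw [Walk.edges_cons, List.countP_cons]
  have hu : u ∉ q.support := ((Walk.cons_isPath_iff _ _).mp hp).2
  rw [aux_countP_zero q hu]
  simp [Sym2.mem_iff]

private lemma aux_countP_end [DecidableEq V] {G : SimpleGraph V} {u v : V} (p : G.Walk u v)
    (hp : p.IsPath) (hnn : ¬ p.Nil) : p.edges.countP (fun e => decide (v ∈ e)) = 1 := by
  have hrev : ¬ p.reverse.Nil := by
    rw [Walk.not_nil_iff_lt_length] at hnn ⊢
    simpa using hnn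
  have := aux_countP_start p.reverse hp.reverse hrev
  rwa [Walk.edges_reverse, List.countP_reverse] at this

private lemma aux_countP_mid [DecidableEq V] {G : SimpleGraph V} :
    ∀ {u v : V} (p : G.Walk u v), p.IsPath → ∀ x, x ∈ p.support → x ≠ u → x ≠ v →
      p.edges.countP (fun e => decide (x ∈ e)) = 2 := by
  intro u v p
  induction p with
  | nil =>
    intro _ x hx hxu _
    simp only [Walk.support_nil, List.mem_singleton] at hx
    exact absurd hx hxu
  | @cons u y v h q ih =>
    intro hp x hx hxu hxv
    have hq : q.IsPath := ((Walk.cons_isPath_iff _ _).mp hp).1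
    rw [Walk.edges_cons, List.countP_cons]
    by_cases hxy : x = y
    · subst hxy
      have hnn : ¬ q.Nil := by
        intro hnil
        exact hxv hnil.eq
      rw [aux_countP_start q hq hnn]
      simp [Sym2.mem_iff]
    · have hxe : (decide (x ∈ s(u, y)) : Bool) = false := by
        simp only [decide_eq_false_iff_not, Sym2.mem_iff]
        rintro (rfl | rfl)
        · exact hxu rfl
        · exact hxy rfl
      rw [hxe]
      have hxq : x ∈ q.support := by
        rcases List.mem_cons.mp (by simpa using hx) with h1 | h1
        · exact absurd h1 hxu
        · exact h1
      rw [ih hq x hxq hxy hxv]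
      simp

private lemma aux_cycle_countP_even [DecidableEq V] {G : SimpleGraph V} {x : V}
    (c : G.Walk x x) (hc : c.IsCycle) (v : V) :
    Even (c.edges.countP (fun e => decide (v ∈ e))) := by
  obtain ⟨y, h, q, rfl⟩ := Walk.not_nil_iff.mp hc.not_nil
  obtain ⟨hq, hxy⟩ := (Walk.cons_isCycle_iff _ _).mp hc
  have hyx : y ≠ x := h.ne'
  have hnn : ¬ q.Nil := fun hnil => hyx hnil.eq
  rw [Walk.edges_cons, List.countP_cons]
  by_cases hvx : v = x
  · subst hvx
    rw [aux_countP_end q hq hnn]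
    simp [Sym2.mem_iff]
  · by_cases hvy : v = y
    · subst hvy
      rw [aux_countP_start q hq hnn]
      simp [Sym2.mem_iff]
    · have hve : (decide (v ∈ s(x, y)) : Bool) = false := by
        simp only [decide_eq_false_iff_not, Sym2.mem_iff]
        rintro (rfl | rfl)
        · exact hvx rfl
        · exact hvy rfl
      rw [hve]
      by_cases hvs : v ∈ q.support
      · rw [aux_countP_mid q hq v hvs hvy hvx]
        simp
      · rw [aux_countP_zero q hvs]
        simp

private lemma aux_ncard_setOf_mem_list {α : Type*} [DecidableEq α] (l : List α) (hl : l.Nodup)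
    (p : α → Bool) : {e | e ∈ l ∧ p e}.ncard = l.countP p := by
  have hset : {e | e ∈ l ∧ p e} = ↑((l.filter p).toFinset) := by
    ext e
    simp [List.mem_filter]
  rw [hset, Set.ncard_coe_finset, List.toFinset_card_of_nodup (hl.filter p),
    List.countP_eq_length_filter]

private lemma aux_neighborSet_deleteEdges {G : SimpleGraph V} (E : Set (Sym2 V)) (v : V) :
    (G.deleteEdges E).neighborSet v = G.neighborSet v \ {w | s(v, w) ∈ E} := by
  ext w
  simp only [mem_neighborSet, deleteEdges_adj, Set.mem_diff, Set.mem_setOf_eq]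

private lemma aux_removed_ncard [DecidableEq V] {G : SimpleGraph V} {x : V}
    (c : G.Walk x x) (v : V) :
    {w | s(v, w) ∈ c.edges}.ncard = {e | e ∈ c.edges ∧ v ∈ e}.ncard := by
  have hinj : Function.Injective (fun w => s(v, w)) := fun a b hab => Sym2.congr_right.mp hab
  have himg : (fun w => s(v, w)) '' {w | s(v, w) ∈ c.edges} = {e | e ∈ c.edges ∧ v ∈ e} := by
    ext e
    constructor
    · rintro ⟨w, hw, rfl⟩
      exact ⟨hw, by simp [Sym2.mem_iff]⟩
    · rintro ⟨he, hve⟩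
      obtain ⟨w, rfl⟩ := Sym2.mem_iff_exists.mp hve
      exact ⟨w, he, rfl⟩
  rw [← Set.ncard_image_of_injective _ hinj, himg]

private lemma aux_delete_cycle_even [Finite V] {G : SimpleGraph V} {x : V}
    (c : G.Walk x x) (hc : c.IsCycle)
    (h : ∀ v, Even ((G.neighborSet v).ncard)) :
    ∀ v, Even (((G.deleteEdges {e | e ∈ c.edges}).neighborSet v).ncard) := by
  classical
  intro v
  have hsub : {w | s(v, w) ∈ c.edges} ⊆ G.neighborSet v := by
    intro w hw
    exact (G.mem_edgeSet).mp (c.edges_subset_edgeSet hw)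
  have hrw : (G.deleteEdges {e | e ∈ c.edges}).neighborSet v
      = G.neighborSet v \ {w | s(v, w) ∈ c.edges} := aux_neighborSet_deleteEdges _ v
  rw [hrw, Set.ncard_diff hsub (Set.toFinite _)]
  have hR : Even ({w | s(v, w) ∈ c.edges}.ncard) := by
    rw [aux_removed_ncard c v]
    have hset : {e | e ∈ c.edges ∧ v ∈ e} = {e | e ∈ c.edges ∧ (fun e => decide (v ∈ e)) e} := by
      ext e; simp
    rw [hset, aux_ncard_setOf_mem_list c.edges hc.edges_nodup]
    exact aux_cycle_countP_even c hc v
  obtain ⟨a, ha⟩ := h v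
  obtain ⟨b, hb⟩ := hR
  exact ⟨a - b, by omega⟩

private lemma aux_neg_set_eq {G : SimpleGraph V} {x : V} (σ : Sym2 V → ℤ) (c : G.Walk x x) :
    {e ∈ (G.deleteEdges {e | e ∈ c.edges}).edgeSet | σ e = -1}
      = {e ∈ G.edgeSet | σ e = -1} \ {e | e ∈ c.edges ∧ σ e = -1} := by
  ext e
  simp only [edgeSet_deleteEdges, Set.mem_diff, Set.mem_setOf_eq, Set.mem_sep_iff]
  tauto

private lemma aux_cycle_count_eq [DecidableEq V] {G : SimpleGraph V} {x : V} (σ : Sym2 V → ℤ)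
    (c : G.Walk x x) (hc : c.IsTrail) :
    {e | e ∈ c.edges ∧ σ e = -1}.ncard = c.edges.countP (fun e => decide (σ e = -1)) := by
  have hset : {e | e ∈ c.edges ∧ σ e = -1}
      = {e | e ∈ c.edges ∧ (fun e => decide (σ e = -1)) e} := by
    ext e; simp
  rw [hset, aux_ncard_setOf_mem_list c.edges hc.edges_nodup]

private lemma aux_cycle_count_le [Finite V] [DecidableEq V] {G : SimpleGraph V} {x : V}
    (σ : Sym2 V → ℤ) (c : G.Walk x x) (hc : c.IsTrail) :
    c.edges.countP (fun e => decide (σ e = -1)) ≤ {e ∈ G.edgeSet | σ e = -1}.ncard := by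
  rw [← aux_cycle_count_eq σ c hc]
  apply Set.ncard_le_ncard _ (Set.toFinite _)
  rintro e ⟨he, hσ⟩
  exact ⟨c.edges_subset_edgeSet he, hσ⟩

private lemma aux_delete_cycle_neg [Finite V] [DecidableEq V] {G : SimpleGraph V} {x : V}
    (σ : Sym2 V → ℤ) (c : G.Walk x x) (hc : c.IsTrail) :
    {e ∈ (G.deleteEdges {e | e ∈ c.edges}).edgeSet | σ e = -1}.ncard
      = {e ∈ G.edgeSet | σ e = -1}.ncard - c.edges.countP (fun e => decide (σ e = -1)) := by
  rw [aux_neg_set_eq σ c, Set.ncard_diff _ (Set.toFinite _), aux_cycle_count_eq σ c hc]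
  rintro e ⟨he, hσ⟩
  exact ⟨c.edges_subset_edgeSet he, hσ⟩

/-- In a nonempty graph with all degrees even there is a cycle. -/
private lemma aux_exists_cycle [Fintype V] {G : SimpleGraph V}
    (hdeg : ∀ v, Even ((G.neighborSet v).ncard)) (hne : G.edgeSet.Nonempty) :
    ∃ (x : V) (c : G.Walk x x), c.IsCycle := by
  classical
  have hadj : ∃ a b, G.Adj a b := by
    obtain ⟨e, he⟩ := hne
    induction e using Sym2.ind with
    | _ a b => exact ⟨a, b, (G.mem_edgeSet).mp he⟩
  obtain ⟨a, b, hab⟩ := hadj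
  set P : ℕ → Prop := fun n => ∃ (p1 p2 : V) (p : G.Walk p1 p2), p.IsPath ∧ p.length = n with hP
  have h1 : P 1 := by
    refine ⟨a, b, Walk.cons hab Walk.nil, ?_, rfl⟩
    rw [Walk.cons_isPath_iff]
    exact ⟨Walk.IsPath.nil, by simp [hab.ne]⟩
  have hbound : ∀ n, P n → n < Fintype.card V := by
    rintro n ⟨_, _, p, hp, rfl⟩
    exact hp.length_lt
  set N := Nat.findGreatest P (Fintype.card V) with hN
  have hPN : P N := Nat.findGreatest_spec (le_of_lt (hbound 1 h1)) h1
  have hmax : ¬ P (N + 1) := by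
    intro h
    exact Nat.findGreatest_is_greatest (Nat.lt_succ_self N)
      (le_of_lt (hbound _ h)) h
  have hN1 : 1 ≤ N := Nat.le_findGreatest (le_of_lt (hbound 1 h1)) h1
  obtain ⟨u, v, p, hp, hlen⟩ := hPN
  have hnn : ¬ p.Nil := Walk.not_nil_iff_lt_length.mpr (by omega)
  -- every neighbor of the start u lies on the path
  have hnb : ∀ w, G.Adj u w → w ∈ p.support := by
    intro w hw
    by_contra hws
    apply hmax
    refine ⟨w, v, Walk.cons hw.symm p, ?_, by simp [hlen]⟩
    rw [Walk.cons_isPath_iff]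
    exact ⟨hp, hws⟩
  obtain ⟨y, hy, q, rfl⟩ := Walk.not_nil_iff.mp hnn
  -- u has a neighbor other than y
  have hexw : ∃ w ∈ G.neighborSet u, w ≠ y := by
    by_contra hcon
    push_neg at hcon
    have hsing : G.neighborSet u = {y} :=
      Set.eq_singleton_iff_unique_mem.mpr ⟨hy, hcon⟩
    have := hdeg u
    rw [hsing, Set.ncard_singleton] at this
    exact (Nat.not_even_iff_odd.mpr odd_one) this
  obtain ⟨w, hw, hwy⟩ := hexw
  have hwadj : G.Adj u w := hw
  have hws : w ∈ (Walk.cons hy q).support := hnb w hwadj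
  have hedge : s(u, w) ∉ (Walk.cons hy q).edges := by
    simp only [Walk.edges_cons, List.mem_cons]
    rintro (h1 | h2)
    · exact hwy (Sym2.congr_right.mp h1)
    · have huq : u ∈ q.support := q.fst_mem_support_of_mem_edges h2
      exact ((Walk.cons_isPath_iff _ _).mp hp).2 huq
  refine ⟨w, Walk.cons hwadj.symm ((Walk.cons hy q).takeUntil w hws), ?_⟩
  rw [Walk.cons_isCycle_iff]
  refine ⟨hp.takeUntil hws, fun hmem => hedge ?_⟩
  have := Walk.edges_takeUntil_subset (Walk.cons hy q) hws hmem
  rwa [Sym2.eq_swap] at this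

/-- In a graph with all degrees even and an odd number of negative edges
there is an unbalanced cycle. -/
private lemma aux_exists_unbalanced [Fintype V] (σ : Sym2 V → ℤ) :
    ∀ (n : ℕ) (G : SimpleGraph V), G.edgeSet.ncard ≤ n →
      (∀ v, Even ((G.neighborSet v).ncard)) →
      Odd {e ∈ G.edgeSet | σ e = -1}.ncard →
      ∃ (x : V) (c : G.Walk x x), c.IsCycle ∧
        Odd (c.edges.countP (fun e => decide (σ e = -1))) := by
  classical
  intro n
  induction n with
  | zero =>
    intro G hle hdeg hodd
    exfalso
    have hE : G.edgeSet = ∅ := by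
      rw [← Set.ncard_eq_zero (Set.toFinite _)]
      omega
    have : {e ∈ G.edgeSet | σ e = -1} = ∅ := by
      rw [hE]; simp
    rw [this] at hodd
    simp at hodd
  | succ n ih =>
    intro G hle hdeg hodd
    have hne : G.edgeSet.Nonempty := by
      obtain ⟨e, he, _⟩ := Set.nonempty_of_ncard_ne_zero
        (fun h => by rw [h] at hodd; simp at hodd)
      exact ⟨e, he⟩
    obtain ⟨x, c, hc⟩ := aux_exists_cycle hdeg hne
    by_cases hco : Odd (c.edges.countP (fun e => decide (σ e = -1)))
    · exact ⟨x, c, hc, hco⟩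
    · have hceven : Even (c.edges.countP (fun e => decide (σ e = -1))) :=
        Nat.not_odd_iff_even.mp hco
      have hdeg' := aux_delete_cycle_even c hc hdeg
      have hkle := aux_cycle_count_le σ c hc.isTrail
      have hodd' : Odd {e ∈ (G.deleteEdges {e | e ∈ c.edges}).edgeSet | σ e = -1}.ncard := by
        rw [aux_delete_cycle_neg σ c hc.isTrail]
        exact Nat.Odd.sub_even hkle hodd hceven
      have hle' : (G.deleteEdges {e | e ∈ c.edges}).edgeSet.ncard ≤ n := by
        have hlt : (G.deleteEdges {e | e ∈ c.edges}).edgeSet.ncard < G.edgeSet.ncard := by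
          apply Set.ncard_lt_ncard _ (Set.toFinite _)
          rw [edgeSet_deleteEdges]
          obtain ⟨y, hy, q, hcq⟩ := Walk.not_nil_iff.mp hc.not_nil
          have he0 : s(x, y) ∈ c.edges := by rw [hcq]; simp
          refine ⟨Set.diff_subset, fun hsub => ?_⟩
          exact (hsub (c.edges_subset_edgeSet he0)).2 he0
        omega
      obtain ⟨x', c', hc', hodd''⟩ := ih (G.deleteEdges {e | e ∈ c.edges}) hle' hdeg' hodd'
      have hsub : ∀ e ∈ c'.edges, e ∈ G.edgeSet := by
        intro e he
        have := c'.edges_subset_edgeSet he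
        rw [edgeSet_deleteEdges] at this
        exact this.1
      refine ⟨x', c'.transfer G hsub, hc'.transfer hsub, ?_⟩
      rwa [Walk.edges_transfer]

private lemma aux_three_of {G : SimpleGraph V} {σ : Sym2 V → ℤ} {a b d : V}
    (p : G.Walk a a) (q : G.Walk b b) (r : G.Walk d d)
    (hp : p.IsCycle) (hq : q.IsCycle) (hr : r.IsCycle)
    (op : Odd (p.edges.countP (fun e => decide (σ e = -1))))
    (oq : Odd (q.edges.countP (fun e => decide (σ e = -1))))
    (or' : Odd (r.edges.countP (fun e => decide (σ e = -1))))
    (hpq : ∀ e ∈ p.edges, e ∉ q.edges)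
    (hrp : ∀ e ∈ r.edges, e ∉ p.edges)
    (hrq : ∀ e ∈ r.edges, e ∉ q.edges) :
    HasKEdgeDisjointUnbalancedCircuits G σ 3 := by
  refine ⟨(fun i => match i with | 0 => a | 1 => b | 2 => d),
    (fun i => match i with | 0 => p | 1 => q | 2 => r), ?_, ?_, ?_⟩
  · intro i
    match i with
    | 0 => exact hp
    | 1 => exact hq
    | 2 => exact hr
  · intro i
    match i with
    | 0 => exact op
    | 1 => exact oq
    | 2 => exact or'
  · intro i j hij e
    match i, j with
    | 0, 0 => exact absurd rfl hij
    | 1, 1 => exact absurd rfl hij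
    | 2, 2 => exact absurd rfl hij
    | 0, 1 => exact fun h1 h2 => hpq e h1 h2
    | 1, 0 => exact fun h1 h2 => hpq e h2 h1
    | 0, 2 => exact fun h1 h2 => hrp e h2 h1
    | 2, 0 => exact fun h1 h2 => hrp e h1 h2
    | 1, 2 => exact fun h1 h2 => hrq e h2 h1
    | 2, 1 => exact fun h1 h2 => hrq e h1 h2

end Aux

/-- A signed eulerian graph with an odd number of negative edges containing two
edge-disjoint unbalanced circuits contains three pairwise edge-disjoint unbalanced
circuits. -/
theorem signed_eulerian_three_unbalanced_circuits {V : Type*} [Fintype V]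
    (G : SimpleGraph V) (σ : Sym2 V → ℤ)
    (hσ : ∀ e ∈ G.edgeSet, σ e = 1 ∨ σ e = -1)
    (hconn : G.Connected) (heven : ∀ v : V, Even ((G.neighborSet v).ncard))
    (hneg : Odd {e ∈ G.edgeSet | σ e = -1}.ncard)
    (h2 : HasKEdgeDisjointUnbalancedCircuits G σ 2) :
    HasKEdgeDisjointUnbalancedCircuits G σ 3 := by
  classical
  obtain ⟨u, c, hcyc, hodd2, hdisj⟩ := h2
  set G1 := G.deleteEdges {e | e ∈ (c 0).edges} with hG1
  have h10 : ∀ e ∈ (c 1).edges, e ∈ G1.edgeSet := by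
    intro e he
    rw [hG1, edgeSet_deleteEdges]
    exact ⟨(c 1).edges_subset_edgeSet he, hdisj 1 0 (by decide) e he⟩
  set c1' := (c 1).transfer G1 h10 with hc1'def
  have hc1 : c1'.IsCycle := (hcyc 1).transfer h10
  have he1 : c1'.edges = (c 1).edges := Walk.edges_transfer _ _
  set G2 := G1.deleteEdges {e | e ∈ c1'.edges} with hG2
  -- degrees stay even
  have hdeg1 : ∀ v, Even ((G1.neighborSet v).ncard) :=
    aux_delete_cycle_even (c 0) (hcyc 0) heven
  have hdeg2 : ∀ v, Even ((G2.neighborSet v).ncard) :=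
    aux_delete_cycle_even c1' hc1 hdeg1
  -- number of negative edges stays odd
  have hk0le := aux_cycle_count_le σ (c 0) (hcyc 0).isTrail
  have hneg1 : Even {e ∈ G1.edgeSet | σ e = -1}.ncard := by
    rw [hG1, aux_delete_cycle_neg σ (c 0) (hcyc 0).isTrail]
    exact Nat.Odd.sub_odd hneg (hodd2 0)
  have hk1le := aux_cycle_count_le σ c1' hc1.isTrail
  have hodd1' : Odd (c1'.edges.countP (fun e => decide (σ e = -1))) := by
    rw [he1]; exact hodd2 1
  have hneg2 : Odd {e ∈ G2.edgeSet | σ e = -1}.ncard := by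
    rw [hG2, aux_delete_cycle_neg σ c1' hc1.isTrail]
    exact Nat.Even.sub_odd hk1le hneg1 hodd1'
  -- find an unbalanced cycle in G2
  obtain ⟨x2, c2, hc2, hodd2'⟩ :=
    aux_exists_unbalanced σ G2.edgeSet.ncard G2 le_rfl hdeg2 hneg2
  have hE1 : G1.edgeSet = G.edgeSet \ {e | e ∈ (c 0).edges} := edgeSet_deleteEdges _
  have hE2 : G2.edgeSet = G1.edgeSet \ {e | e ∈ c1'.edges} := edgeSet_deleteEdges _
  have hsubG : ∀ e ∈ c2.edges, e ∈ G.edgeSet := by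
    intro e he
    have h1 := c2.edges_subset_edgeSet he
    rw [hE2, hE1] at h1
    exact h1.1.1
  have hnot0 : ∀ e ∈ c2.edges, e ∉ (c 0).edges := by
    intro e he
    have h1 := c2.edges_subset_edgeSet he
    rw [hE2, hE1] at h1
    exact h1.1.2
  have hnot1 : ∀ e ∈ c2.edges, e ∉ (c 1).edges := by
    intro e he
    have h1 := c2.edges_subset_edgeSet he
    rw [hE2] at h1
    rw [← he1]
    exact h1.2
  refine aux_three_of (c 0) (c 1) (c2.transfer G hsubG)
    (hcyc 0) (hcyc 1) (hc2.transfer hsubG)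
    (hodd2 0) (hodd2 1) (by rwa [Walk.edges_transfer])
    (hdisj 0 1 (by decide)) ?_ ?_
  · intro e he
    rw [Walk.edges_transfer] at he
    exact hnot0 e he
  · intro e he
    rw [Walk.edges_transfer] at he
    exact hnot1 e he
end

section
/- Let G be a finite k-edge-connected simple graph, let v be a vertex of G, and let v_1, v_2, …, v_k be a sequence of vertices of G, each distinct from v (repetitions among the v_i are allowed). Then there exist k pairwise edge-disjoint paths F_1, F_2, …, F_k in G such that F_i joins v to v_i for each i ∈ {1, …, k}. -/
/-!
Work with integer flows of capacity one per edge. Ford–Fulkerson builds, one target at a time, a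
flow sending one unit from `v` to each `v_i`: if no augmenting path reached the next target, every
edge leaving the set `R` of residually reachable vertices would carry a unit out of `R`, so there
would be at most as many such edges as targets already served, fewer than `k`, and deleting them
would separate `v` from the target. Conversely, each target is reachable from `v` along arcs
carrying flow (otherwise the flow out of the reachable set would be nonpositive, although it equals
the number of targets outside it); removing such paths one at a time leaves a flow for the
remaining targets that vanishes on the removed edges, which makes the paths edge-disjoint.
-/

open SimpleGraph Finset

def KEdgeConnected {V : Type*} (G : SimpleGraph V) (k : ℕ) : Prop :=
  G.Connected ∧ ∀ S : Set (Sym2 V), S.ncard < k → (G.deleteEdges S).Connected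

lemma KEdgeConnected.isEdgeReachable {V : Type*} {G : SimpleGraph V} {k : ℕ}
    (hG : KEdgeConnected G k) (u w : V) : G.IsEdgeReachable k u w := fun S hS => by
  have hfin : S.Finite := Set.finite_of_encard_le_coe hS.le
  rw [← hfin.cast_ncard_eq] at hS
  exact (hG.2 S (by exact_mod_cast hS)).preconnected u w

section

variable {V : Type*}

section netOut

variable [Fintype V]

def netOut (f : V → V → ℤ) (u : V) : ℤ := ∑ w, f u w

lemma netOut_add (f g : V → V → ℤ) : netOut (f + g) = netOut f + netOut g := by
  ext u; simp [netOut, sum_add_distrib]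

lemma netOut_sub (f g : V → V → ℤ) : netOut (f - g) = netOut f - netOut g := by
  ext u; simp [netOut, sum_sub_distrib]

end netOut

namespace SimpleGraph

variable (G : SimpleGraph V)

/-- `f x y = 1` means that one unit crosses the edge `s(x, y)` from `x` to `y`. -/
structure IsUnitCapacityFlow (f : V → V → ℤ) : Prop where
  skew : ∀ x y, f y x = -f x y
  le_one : ∀ x y, f x y ≤ 1
  eq_zero_of_not_adj : ∀ x y, ¬G.Adj x y → f x y = 0

variable {G}

lemma isUnitCapacityFlow_zero : G.IsUnitCapacityFlow 0 := ⟨by simp, by simp, by simp⟩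

lemma Walk.mk_mem_edges_of_mem_darts {u w : V} {p : G.Walk u w} {d : G.Dart}
    (hd : d ∈ p.darts) : s(d.fst, d.snd) ∈ p.edges :=
  List.mem_map_of_mem hd

lemma Walk.exists_dart_of_mk_mem_edges {u w x y : V} {p : G.Walk u w} (h : s(x, y) ∈ p.edges) :
    ∃ d ∈ p.darts, d.toProd = (x, y) ∨ d.toProd = (y, x) := by
  obtain ⟨d, hd, he⟩ := List.mem_map.1 h
  exact ⟨d, hd, dart_edge_eq_mk'_iff.1 he⟩

lemma exists_isPath_or_exists_separating [Fintype V] (P : V → V → Prop) (u w : V) :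
    (∃ p : G.Walk u w, p.IsPath ∧ ∀ d ∈ p.darts, P d.fst d.snd) ∨
      ∃ R : Finset V, u ∈ R ∧ w ∉ R ∧ ∀ x ∈ R, ∀ y ∉ R, G.Adj x y → ¬P x y := by
  classical
  by_cases h : ∃ p : G.Walk u w, ∀ d ∈ p.darts, P d.fst d.snd
  · obtain ⟨p, hp⟩ := h
    exact .inl ⟨p.bypass, p.bypass_isPath, fun d hd => hp d (p.darts_bypass_subset_darts hd)⟩
  · refine .inr ⟨({x | ∃ p : G.Walk u x, ∀ d ∈ p.darts, P d.fst d.snd} : Finset V), ?_, ?_, ?_⟩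
    · simp only [mem_filter, mem_univ, true_and]
      exact ⟨.nil, by simp⟩
    · simpa using h
    · simp only [mem_filter, mem_univ, true_and]
      rintro x ⟨p, hp⟩ y hy hxy hP
      refine hy ⟨p.concat hxy, fun d hd => ?_⟩
      rw [Walk.darts_concat, List.concat_eq_append, List.mem_append, List.mem_singleton] at hd
      rcases hd with hd | rfl
      exacts [hp d hd, hP]

end SimpleGraph

variable [DecidableEq V]

def arcFlow (a b : V) : V → V → ℤ :=
  Pi.single a (Pi.single b 1) - Pi.single b (Pi.single a 1)

lemma arcFlow_swap (a b x y : V) : arcFlow a b y x = -arcFlow a b x y := by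
  simp only [arcFlow, Pi.sub_apply, Pi.single_apply]
  split_ifs <;> simp_all

lemma arcFlow_apply_self {a b : V} (hab : a ≠ b) : arcFlow a b a b = 1 := by
  simp [arcFlow, hab]

lemma arcFlow_apply_eq_zero {a b x y : V} (h : s(x, y) ≠ s(a, b)) : arcFlow a b x y = 0 := by
  simp only [arcFlow, Pi.sub_apply, Pi.single_apply]
  split_ifs <;> simp_all

lemma netOut_arcFlow [Fintype V] (a b : V) :
    netOut (arcFlow a b) = Pi.single a 1 - Pi.single b 1 := by
  ext u
  simp only [netOut, arcFlow, Pi.sub_apply, Pi.single_apply, sum_sub_distrib]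
  split_ifs <;> simp_all

lemma sum_netOut_eq_sum_sum_compl [Fintype V] {f : V → V → ℤ} (hskew : ∀ x y, f y x = -f x y)
    (R : Finset V) : ∑ u ∈ R, netOut f u = ∑ u ∈ R, ∑ w ∈ Rᶜ, f u w := by
  have hinner : ∑ u ∈ R, ∑ w ∈ R, f u w = 0 := by
    have h : ∑ u ∈ R, ∑ w ∈ R, f u w = -∑ u ∈ R, ∑ w ∈ R, f u w := by
      conv_lhs => rw [Finset.sum_comm]
      simp only [← sum_neg_distrib]
      exact sum_congr rfl fun _ _ => sum_congr rfl fun _ _ => hskew _ _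
    linarith
  simp only [netOut, ← sum_add_sum_compl R, sum_add_distrib, hinner, zero_add]

/-- The net outflow of the sum of unit flows from `v` to each `t i`. -/
def demand (v : V) {m : ℕ} (t : Fin m → V) : V → ℤ := ∑ i, (Pi.single v 1 - Pi.single (t i) 1)

lemma demand_eq_add_demand_tail {v : V} {m : ℕ} (t : Fin (m + 1) → V) :
    demand v t = Pi.single v 1 - Pi.single (t 0) 1 + demand v (Fin.tail t) :=
  Fin.sum_univ_succ _

lemma sum_demand {v : V} {m : ℕ} (t : Fin m → V) {R : Finset V} (hv : v ∈ R) :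
    ∑ u ∈ R, demand v t u = #{i | t i ∉ R} := by
  simp only [demand, Finset.sum_apply, Pi.sub_apply]
  rw [Finset.sum_comm]
  simp only [sum_sub_distrib, sum_pi_single', hv, if_true, card_filter, Nat.cast_sum,
    Nat.cast_ite, Nat.cast_one, Nat.cast_zero]
  rw [← sum_sub_distrib]
  exact sum_congr rfl fun i _ => by split_ifs <;> simp_all

namespace SimpleGraph

variable {G : SimpleGraph V}

namespace Walk

def flow : {u w : V} → G.Walk u w → V → V → ℤ
  | _, _, nil => 0
  | u, _, cons (v := x) _ p => arcFlow u x + p.flow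

@[simp] lemma flow_nil {u : V} : (nil : G.Walk u u).flow = 0 := rfl

@[simp] lemma flow_cons {u x w : V} (h : G.Adj u x) (p : G.Walk x w) :
    (cons h p).flow = arcFlow u x + p.flow := rfl

lemma flow_swap {u w : V} (p : G.Walk u w) (x y : V) : p.flow y x = -p.flow x y := by
  induction p with
  | nil => simp
  | cons h p ih => simp only [flow_cons, Pi.add_apply, arcFlow_swap _ _ x y, ih]; ring

lemma netOut_flow [Fintype V] {u w : V} (p : G.Walk u w) :
    netOut p.flow = Pi.single u 1 - Pi.single w 1 := by
  induction p with
  | nil => ext; simp [netOut]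
  | cons h p ih => rw [flow_cons, netOut_add, ih, netOut_arcFlow]; abel

lemma flow_eq_zero_of_notMem_edges {u w x y : V} (p : G.Walk u w) (h : s(x, y) ∉ p.edges) :
    p.flow x y = 0 := by
  induction p with
  | nil => rfl
  | cons had p ih =>
    simp only [edges_cons, List.mem_cons, not_or] at h
    simp [arcFlow_apply_eq_zero h.1, ih h.2]

lemma IsTrail.flow_dart {u w : V} {p : G.Walk u w} (hp : p.IsTrail) {d : G.Dart}
    (hd : d ∈ p.darts) : p.flow d.fst d.snd = 1 := by
  induction p with
  | nil => simp at hd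
  | cons had p ih =>
    rw [isTrail_cons] at hp
    rw [darts_cons, List.mem_cons] at hd
    rcases hd with rfl | hd
    · simp [arcFlow_apply_self had.ne, flow_eq_zero_of_notMem_edges p hp.2]
    · have hne : s(d.fst, d.snd) ≠ s(_, _) := fun he => hp.2 (he ▸ mk_mem_edges_of_mem_darts hd)
      simp [arcFlow_apply_eq_zero hne, ih hp.1 hd]

end Walk

namespace IsUnitCapacityFlow

variable {f : V → V → ℤ}

lemma add_flow {u w : V} {p : G.Walk u w} (hf : G.IsUnitCapacityFlow f) (hp : p.IsTrail)
    (hres : ∀ d ∈ p.darts, f d.fst d.snd ≤ 0) : G.IsUnitCapacityFlow (f + p.flow) where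
  skew x y := by simp only [Pi.add_apply, hf.skew x y, p.flow_swap x y]; ring
  le_one x y := by
    by_cases hxy : s(x, y) ∈ p.edges
    · obtain ⟨⟨⟨a, b⟩, hab⟩, hd, h | h⟩ := Walk.exists_dart_of_mk_mem_edges hxy <;>
        obtain ⟨rfl, rfl⟩ := Prod.mk.inj h
      · have := hres _ hd
        simp only [Pi.add_apply, hp.flow_dart hd]; linarith
      · simp only [Pi.add_apply, p.flow_swap a b, hp.flow_dart hd]; linarith [hf.le_one b a]
    · simp [p.flow_eq_zero_of_notMem_edges hxy, hf.le_one x y]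
  eq_zero_of_not_adj x y hxy := by
    simp [hf.eq_zero_of_not_adj x y hxy,
      p.flow_eq_zero_of_notMem_edges fun h => hxy (p.adj_of_mem_edges h)]

lemma sub_flow {u w : V} {p : G.Walk u w} (hf : G.IsUnitCapacityFlow f) (hp : p.IsTrail)
    (hsat : ∀ d ∈ p.darts, f d.fst d.snd = 1) :
    G.IsUnitCapacityFlow (f - p.flow) ∧ ∀ x y, s(x, y) ∈ p.edges → (f - p.flow) x y = 0 := by
  have hzero : ∀ x y, s(x, y) ∈ p.edges → (f - p.flow) x y = 0 := by
    intro x y hxy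
    obtain ⟨⟨⟨a, b⟩, hab⟩, hd, h | h⟩ := Walk.exists_dart_of_mk_mem_edges hxy <;>
      obtain ⟨rfl, rfl⟩ := Prod.mk.inj h
    · simp [hsat _ hd, hp.flow_dart hd]
    · simp [hf.skew a b, p.flow_swap a b, hsat _ hd, hp.flow_dart hd]
  refine ⟨⟨fun x y => ?_, fun x y => ?_, fun x y hxy => ?_⟩, hzero⟩
  · simp only [Pi.sub_apply, hf.skew x y, p.flow_swap x y]; ring
  · by_cases hxy : s(x, y) ∈ p.edges
    · simp [hzero x y hxy]
    · simp [p.flow_eq_zero_of_notMem_edges hxy, hf.le_one x y]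
  · simp [hf.eq_zero_of_not_adj x y hxy,
      p.flow_eq_zero_of_notMem_edges fun h => hxy (p.adj_of_mem_edges h)]

variable [Fintype V] {v : V} {m : ℕ} {t : Fin m → V}

lemma card_eq_sum_cut (hf : G.IsUnitCapacityFlow f) (hdem : netOut f = demand v t)
    {R : Finset V} (hv : v ∈ R) : (#{i | t i ∉ R} : ℤ) = ∑ u ∈ R, ∑ w ∈ Rᶜ, f u w := by
  rw [← sum_demand t hv, ← hdem, sum_netOut_eq_sum_sum_compl hf.skew]

lemma exists_saturated_path (hf : G.IsUnitCapacityFlow f) (hdem : netOut f = demand v t)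
    (i : Fin m) : ∃ p : G.Walk v (t i), p.IsPath ∧ ∀ d ∈ p.darts, f d.fst d.snd = 1 := by
  refine (exists_isPath_or_exists_separating (fun x y => f x y = 1) v (t i)).resolve_right ?_
  rintro ⟨R, hvR, htR, hcut⟩
  have hpos : (1 : ℤ) ≤ #{i | t i ∉ R} := by exact_mod_cast card_pos.2 ⟨i, by simpa using htR⟩
  have hnonpos : ∑ u ∈ R, ∑ w ∈ Rᶜ, f u w ≤ 0 := by
    refine sum_nonpos fun x hx => sum_nonpos fun y hy => ?_
    by_cases hxy : G.Adj x y
    · have := hcut x hx y (mem_compl.1 hy) hxy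
      have := hf.le_one x y
      omega
    · exact (hf.eq_zero_of_not_adj x y hxy).le
  linarith [hf.card_eq_sum_cut hdem hvR]

lemma exists_augmenting_path {k : ℕ} (hf : G.IsUnitCapacityFlow f)
    (hdem : netOut f = demand v t) (hm : m < k) {a : V} (ha : G.IsEdgeReachable k v a) :
    ∃ p : G.Walk v a, p.IsPath ∧ ∀ d ∈ p.darts, f d.fst d.snd ≤ 0 := by
  classical
  refine (exists_isPath_or_exists_separating (fun x y => f x y ≤ 0) v a).resolve_right ?_
  rintro ⟨R, hvR, haR, hcut⟩
  set C : Finset (V × V) := {e ∈ R ×ˢ Rᶜ | G.Adj e.1 e.2}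
  have hC : (#C : ℤ) ≤ m := by
    have hsum : ∑ u ∈ R, ∑ w ∈ Rᶜ, f u w = #C := by
      rw [← sum_product', card_filter, Nat.cast_sum]
      refine sum_congr rfl fun ⟨x, y⟩ hxy => ?_
      obtain ⟨hx, hy⟩ := mem_product.1 hxy
      by_cases hadj : G.Adj x y
      · have := hcut x hx y (mem_compl.1 hy) hadj
        have := hf.le_one x y
        simp only [hadj, if_true, Nat.cast_one]
        omega
      · simp [hadj, hf.eq_zero_of_not_adj x y hadj]
    have hle : #{i | t i ∉ R} ≤ m := (card_filter_le _ _).trans (by simp)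
    rw [← hsum, ← hf.card_eq_sum_cut hdem hvR]
    exact_mod_cast hle
  let S : Set (Sym2 V) := ↑(C.image fun e => s(e.1, e.2))
  have hS : S.encard < k := by
    rw [Set.encard_coe_eq_coe_finsetCard]
    exact_mod_cast (card_image_le.trans (by exact_mod_cast hC)).trans_lt hm
  obtain ⟨p⟩ := ha hS
  obtain ⟨d, -, hd, hd'⟩ := p.exists_boundary_dart R hvR haR
  obtain ⟨hadj, hdS⟩ := deleteEdges_adj.1 d.adj
  have hdC : d.toProd ∈ C := mem_filter.2 ⟨mem_product.2 ⟨hd, mem_compl.2 hd'⟩, hadj⟩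
  exact hdS (mem_coe.2 (mem_image_of_mem _ hdC))

lemma exists_edgeDisjoint_paths (hf : G.IsUnitCapacityFlow f) (hdem : netOut f = demand v t) :
    ∃ p : ∀ i, G.Walk v (t i), (∀ i, (p i).IsPath) ∧
      (∀ i, ∀ d ∈ (p i).darts, f d.fst d.snd = 1) ∧
      Pairwise fun i j => (p i).edges.Disjoint (p j).edges := by
  induction m generalizing f with
  | zero => exact ⟨finZeroElim, finZeroElim, finZeroElim, fun i => i.elim0⟩
  | succ m ih =>
    obtain ⟨p₀, hp₀, hsat₀⟩ := hf.exists_saturated_path hdem 0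
    obtain ⟨hf', hzero⟩ := hf.sub_flow hp₀.isTrail hsat₀
    obtain ⟨q, hq, hsat', hdisj⟩ := ih (t := Fin.tail t) hf' <| by
      rw [netOut_sub, hdem, p₀.netOut_flow, demand_eq_add_demand_tail]
      abel
    have hfresh : ∀ i, ∀ d ∈ (q i).darts, s(d.fst, d.snd) ∉ p₀.edges := fun i d hd he => by
      simpa [hzero _ _ he] using hsat' i d hd
    have hsat : ∀ i, ∀ d ∈ (q i).darts, f d.fst d.snd = 1 := fun i d hd => by
      simpa [p₀.flow_eq_zero_of_notMem_edges (hfresh i d hd)] using hsat' i d hd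
    have hdisj₀ : ∀ i, p₀.edges.Disjoint (q i).edges := fun i e he hqe => by
      obtain ⟨d, hd, rfl⟩ := List.mem_map.1 hqe
      exact hfresh i d hd he
    refine ⟨Fin.cons p₀ q, Fin.cases hp₀ hq, Fin.cases hsat₀ hsat, fun i j hij => ?_⟩
    induction i using Fin.cases <;> induction j using Fin.cases
    · exact absurd rfl hij
    · exact hdisj₀ _
    · exact (hdisj₀ _).symm
    · exact hdisj fun h => hij (congrArg Fin.succ h)

end IsUnitCapacityFlow

variable [Fintype V] {v : V}

lemma exists_isUnitCapacityFlow {k m : ℕ} (hm : m ≤ k) (t : Fin m → V)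
    (ht : ∀ i, G.IsEdgeReachable k v (t i)) :
    ∃ f, G.IsUnitCapacityFlow f ∧ netOut f = demand v t := by
  induction m with
  | zero => exact ⟨0, isUnitCapacityFlow_zero, by ext; simp [netOut, demand]⟩
  | succ m ih =>
    obtain ⟨f, hf, hdem⟩ := ih (by omega) (Fin.tail t) fun i => ht i.succ
    obtain ⟨p, hp, hres⟩ := hf.exists_augmenting_path hdem (by omega) (ht 0)
    refine ⟨f + p.flow, hf.add_flow hp.isTrail hres, ?_⟩
    rw [netOut_add, hdem, p.netOut_flow, demand_eq_add_demand_tail]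
    abel

theorem exists_edgeDisjoint_paths_of_isEdgeReachable {k : ℕ} (t : Fin k → V)
    (ht : ∀ i, G.IsEdgeReachable k v (t i)) :
    ∃ p : ∀ i, G.Walk v (t i), (∀ i, (p i).IsPath) ∧
      Pairwise fun i j => (p i).edges.Disjoint (p j).edges := by
  obtain ⟨f, hf, hdem⟩ := exists_isUnitCapacityFlow le_rfl t ht
  obtain ⟨p, hp, -, hdisj⟩ := hf.exists_edgeDisjoint_paths hdem
  exact ⟨p, hp, hdisj⟩

end SimpleGraph

end

theorem kEdgeConnected_fan_general {V : Type*} [Fintype V] (G : SimpleGraph V) (k : ℕ)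
    (hG : KEdgeConnected G k) (v : V) (f : Fin k → V) :
    ∃ p : (i : Fin k) → G.Walk v (f i),
      (∀ i, (p i).IsPath) ∧
      (∀ i j, i ≠ j → ∀ e, e ∈ (p i).edges → e ∉ (p j).edges) := by
  classical
  obtain ⟨p, hp, hdisj⟩ :=
    G.exists_edgeDisjoint_paths_of_isEdgeReachable f fun i => hG.isEdgeReachable v (f i)
  exact ⟨p, hp, fun i j hij e hi hj => hdisj hij hi hj⟩

/-- In a `k`-edge-connected graph, for every vertex `v` and every sequence
`v_1, …, v_k` of vertices distinct from `v` there is a `v`-`(v_1, …, v_k)`-fan: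
`k` pairwise edge-disjoint paths, the `i`-th joining `v` to `v_i`. -/
theorem kEdgeConnected_fan {V : Type*} [Fintype V] (G : SimpleGraph V) (k : ℕ)
    (hG : KEdgeConnected G k) (v : V) (f : Fin k → V) (hf : ∀ i, f i ≠ v) :
    ∃ p : (i : Fin k) → G.Walk v (f i),
      (∀ i, (p i).IsPath) ∧
      (∀ i j, i ≠ j → ∀ e, e ∈ (p i).edges → e ∉ (p j).edges) :=
  kEdgeConnected_fan_general G k hG v f
end

section
/- Let T be a finite tree, let k ≥ 1 be an integer, and let B be a subset of the vertex set of T with |B| ≥ k and |B| ≡ k (mod 2). Then the vertex set of T can be partitioned into k pairwise disjoint nonempty subsets V_1, V_2, …, V_k such that each V_i contains an odd number of vertices from B and each V_i induces a connected subgraph (subtree) of T. -/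
/-!
Induct on `k`, partitioning an arbitrary vertex set `S` that induces a subtree. If `k ≥ 2`,
root the tree at some `r ∈ B ∩ S` and let `v ∈ B ∩ S` be farthest from `r`. The descendants
of `v` inside `S` contain exactly one vertex of `B`, and they and the rest of `S` both induce
subtrees, since a geodesic between two vertices of a subtree stays inside it. Split off the
descendants of `v` as one part, and partition the rest of `S` into `k - 1` parts.
-/

namespace SimpleGraph

variable {V : Type*} {G : SimpleGraph V}

lemma connected_induce_of_forall_walk {s : Set V} {c : V} (hc : c ∈ s)
    (h : ∀ u ∈ s, ∃ p : G.Walk c u, ∀ x ∈ p.support, x ∈ s) : (G.induce s).Connected := by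
  rw [connected_iff_exists_forall_reachable]
  refine ⟨⟨c, hc⟩, fun ⟨u, hu⟩ => ?_⟩
  obtain ⟨p, hp⟩ := h u hu
  exact (p.induce s hp).reachable

lemma Walk.dist_add_dist_of_mem_support {u v w : V} {p : G.Walk u v}
    (hp : p.length = G.dist u v) (hw : w ∈ p.support) :
    G.dist u w + G.dist w v = G.dist u v := by
  classical
  have htake := length_eq_dist_of_subwalk hp (p.isSubwalk_takeUntil hw)
  have hdrop := length_eq_dist_of_subwalk hp (p.isSubwalk_dropUntil hw)
  rw [← htake, ← hdrop, ← Walk.length_append, p.take_spec hw, hp]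

lemma IsAcyclic.mem_of_mem_support_of_isPath (hG : G.IsAcyclic) {s : Set V}
    (hs : (G.induce s).Preconnected) {x y w : V} (hx : x ∈ s) (hy : y ∈ s)
    {p : G.Walk x y} (hp : p.IsPath) (hw : w ∈ p.support) : w ∈ s := by
  classical
  obtain ⟨q⟩ := hs ⟨x, hx⟩ ⟨y, hy⟩
  let q' : G.Walk x y := q.map (Embedding.induce s).toHom
  have hpq : p = q'.bypass :=
    congrArg Subtype.val ((hG.subsingleton_path x y).elim ⟨p, hp⟩ ⟨q'.bypass, q'.bypass_isPath⟩)
  rw [hpq] at hw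
  obtain ⟨⟨w', hw'⟩, -, rfl⟩ :=
    List.mem_map.mp (q.support_map _ ▸ q'.support_bypass_subset_support hw)
  exact hw'

lemma IsTree.exists_walk_length_eq_dist_of_connected_induce (hG : G.IsTree) {s : Set V}
    (hs : (G.induce s).Preconnected) {x y : V} (hx : x ∈ s) (hy : y ∈ s) :
    ∃ p : G.Walk x y, p.length = G.dist x y ∧ ∀ w ∈ p.support, w ∈ s := by
  obtain ⟨p, hp, hlen⟩ := hG.connected.exists_path_of_dist x y
  exact ⟨p, hlen, fun w hw => hG.isAcyclic.mem_of_mem_support_of_isPath hs hx hy hp hw⟩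

/-- In a tree rooted at `r`, this is the set of descendants of `v`. -/
def descendants (G : SimpleGraph V) (r v : V) : Set V :=
  {u | G.dist r v + G.dist v u = G.dist r u}

variable {T : SimpleGraph V} {S : Set V}

lemma IsTree.connected_induce_inter_descendants (hT : T.IsTree) (hS : (T.induce S).Connected)
    (r : V) {v : V} (hv : v ∈ S) : (T.induce (S ∩ T.descendants r v)).Connected := by
  refine connected_induce_of_forall_walk (c := v) ⟨hv, by simp [descendants]⟩ ?_
  rintro u ⟨hu, hvu⟩
  obtain ⟨p, hp, hpS⟩ := hT.exists_walk_length_eq_dist_of_connected_induce hS.preconnected hv hu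
  refine ⟨p, fun w hw => ⟨hpS w hw, ?_⟩⟩
  have hvwu := p.dist_add_dist_of_mem_support hp hw
  have hrwu : T.dist r u ≤ T.dist r w + T.dist w u := hT.connected.dist_triangle
  have hrvw : T.dist r w ≤ T.dist r v + T.dist v w := hT.connected.dist_triangle
  simp only [descendants, Set.mem_ofPred_eq] at hvu ⊢
  omega

lemma IsTree.connected_induce_diff_descendants (hT : T.IsTree) (hS : (T.induce S).Connected)
    {r v : V} (hr : r ∈ S \ T.descendants r v) :
    (T.induce (S \ T.descendants r v)).Connected := by
  refine connected_induce_of_forall_walk hr ?_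
  rintro u ⟨hu, hvu⟩
  obtain ⟨p, hp, hpS⟩ := hT.exists_walk_length_eq_dist_of_connected_induce hS.preconnected hr.1 hu
  refine ⟨p, fun w hw => ⟨hpS w hw, fun hvw => hvu ?_⟩⟩
  have hrwu := p.dist_add_dist_of_mem_support hp hw
  have hvwu : T.dist v u ≤ T.dist v w + T.dist w u := hT.connected.dist_triangle
  have hrvu : T.dist r u ≤ T.dist r v + T.dist v u := hT.connected.dist_triangle
  simp only [descendants, Set.mem_ofPred_eq] at hvw ⊢
  omega

/-- Taking `v` to be a vertex of `B ∩ S` farthest from some `r ∈ B ∩ S`, the descendants of `v`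
contain no other vertex of `B`. -/
lemma IsTree.exists_connected_split (hT : T.IsTree) (hS : (T.induce S).Connected) {B : Set V}
    (hB : 2 ≤ (B ∩ S).ncard) :
    ∃ A ⊆ S, (B ∩ A).ncard = 1 ∧ (T.induce A).Connected ∧ (T.induce (S \ A)).Connected := by
  have hfin : (B ∩ S).Finite := Set.finite_of_ncard_pos (by omega)
  obtain ⟨r, b, hr, hb, hrb⟩ := (Set.one_lt_ncard_iff hfin).mp hB
  obtain ⟨v, hv, hfar⟩ := Set.exists_max_image (B ∩ S) (T.dist r) hfin ⟨r, hr⟩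
  have hrv : r ∉ T.descendants r v := by
    have := hfar b hb
    have := hT.connected.pos_dist_of_ne hrb
    simp only [descendants, Set.mem_ofPred_eq, dist_self, dist_comm (u := v)]
    omega
  refine ⟨S ∩ T.descendants r v, Set.inter_subset_left, ?_,
    hT.connected_induce_inter_descendants hS r hv.2, ?_⟩
  · rw [Set.ncard_eq_one]
    refine ⟨v, Set.eq_singleton_iff_unique_mem.mpr ⟨⟨hv.1, hv.2, by simp [descendants]⟩, ?_⟩⟩
    rintro u ⟨huB, huS, hvu⟩
    have := hfar u ⟨huB, huS⟩
    simp only [descendants, Set.mem_ofPred_eq] at hvu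
    exact ((hT.connected.dist_eq_zero_iff).mp (by omega)).symm
  · rw [Set.sdiff_self_inter]
    exact hT.connected_induce_diff_descendants hS ⟨hr.2, hrv⟩

def IsOddConnectedPartition (G : SimpleGraph V) (B S : Set V) {k : ℕ} (P : Fin k → Set V) :
    Prop :=
  (∀ i, (P i).Nonempty) ∧ (∀ i j, i ≠ j → Disjoint (P i) (P j)) ∧ (⋃ i, P i) = S ∧
    (∀ i, Odd (B ∩ P i).ncard) ∧ (∀ i, (G.induce (P i)).Connected)

lemma isOddConnectedPartition_const {B : Set V} (hS : (G.induce S).Connected)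
    (hB : Odd (B ∩ S).ncard) : G.IsOddConnectedPartition B S (fun _ : Fin 1 => S) :=
  ⟨fun _ => Set.nonempty_coe_sort.mp hS.nonempty,
    fun i j hij => absurd (Subsingleton.elim i j) hij, Set.iUnion_const S, fun _ => hB, fun _ => hS⟩

lemma IsOddConnectedPartition.cons {B A C : Set V} {k : ℕ} {P : Fin k → Set V}
    (hP : G.IsOddConnectedPartition B C P) (hA : (G.induce A).Connected)
    (hAB : Odd (B ∩ A).ncard) (hAC : Disjoint A C) :
    G.IsOddConnectedPartition B (A ∪ C) (Fin.cons A P : Fin (k + 1) → Set V) := by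
  obtain ⟨hne, hdisj, hunion, hodd, hconn⟩ := hP
  have hPC : ∀ i, Disjoint A (P i) := fun i => hAC.mono_right (hunion ▸ Set.subset_iUnion P i)
  refine ⟨Fin.cases (Set.nonempty_coe_sort.mp hA.nonempty) hne, ?_, by simp [hunion],
    Fin.cases hAB hodd, Fin.cases hA hconn⟩
  intro i j hij
  cases i using Fin.cases <;> cases j using Fin.cases
  · exact absurd rfl hij
  · simpa using hPC _
  · simpa using (hPC _).symm
  · simpa using hdisj _ _ (fun h => hij (congrArg Fin.succ h))

lemma IsTree.exists_isOddConnectedPartition (hT : T.IsTree) (B : Set V) {k : ℕ} (hk : 1 ≤ k)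
    (hS : (T.induce S).Connected) (hBk : k ≤ (B ∩ S).ncard)
    (hpar : (B ∩ S).ncard % 2 = k % 2) :
    ∃ P : Fin k → Set V, T.IsOddConnectedPartition B S P := by
  induction k, hk using Nat.le_induction generalizing S with
  | base => exact ⟨_, isOddConnectedPartition_const hS (Nat.odd_iff.mpr (by omega))⟩
  | succ k hk ih =>
    obtain ⟨A, hAS, hBA, hA, hSA⟩ := hT.exists_connected_split (B := B) hS (by omega)
    have hBSA : (B ∩ (S \ A)).ncard = (B ∩ S).ncard - 1 := by
      rw [← hBA, Set.inter_sdiff_distrib_left, Set.ncard_sdiff (Set.inter_subset_inter_right B hAS)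
        (Set.finite_of_ncard_pos (by omega))]
    obtain ⟨P, hP⟩ := ih hSA (by omega) (by omega)
    refine ⟨Fin.cons A P, ?_⟩
    exact Set.union_sdiff_cancel hAS ▸ hP.cons hA (hBA ▸ odd_one) Set.disjoint_sdiff_right

end SimpleGraph

theorem tree_partition_odd_subtrees_general {V : Type*} (T : SimpleGraph V)
    (hT : T.IsTree) (k : ℕ) (hk : 1 ≤ k) (B : Set V)
    (hB : k ≤ B.ncard) (hpar : B.ncard % 2 = k % 2) :
    ∃ P : Fin k → Set V,
      (∀ i, (P i).Nonempty) ∧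
      (∀ i j, i ≠ j → Disjoint (P i) (P j)) ∧
      (⋃ i, P i) = Set.univ ∧
      (∀ i, Odd (B ∩ P i).ncard) ∧
      (∀ i, (T.induce (P i)).Connected) := by
  have hconn : (T.induce Set.univ).Connected := T.induceUnivIso.connected_iff.mpr hT.connected
  exact hT.exists_isOddConnectedPartition B hk hconn (by simpa using hB) (by simpa using hpar)

/-- Claim 1 of Theorem `3.1`: if `T` is a tree and `B ⊆ V(T)` satisfies `|B| ≥ k` and
`|B| ≡ k (mod 2)`, then `V(T)` can be partitioned into `k` nonempty sets, each
containing an odd number of vertices of `B` and each inducing a subtree of `T`. -/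
theorem tree_partition_odd_subtrees {V : Type*} [Fintype V] (T : SimpleGraph V)
    (hT : T.IsTree) (k : ℕ) (hk : 1 ≤ k) (B : Set V)
    (hB : k ≤ B.ncard) (hpar : B.ncard % 2 = k % 2) :
    ∃ P : Fin k → Set V,
      (∀ i, (P i).Nonempty) ∧
      (∀ i j, i ≠ j → Disjoint (P i) (P j)) ∧
      (⋃ i, P i) = Set.univ ∧
      (∀ i, Odd (B ∩ P i).ncard) ∧
      (∀ i, (T.induce (P i)).Connected) :=
  tree_partition_odd_subtrees_general T hT k hk B hB hpar
end

section
/- Let G be a finite connected 2d-regular simple graph with an odd number of vertices, where d ≥ 1. Then G contains d pairwise edge-disjoint odd circuits. -/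
/-!
Petersen's argument. A `2d`-regular graph has an orientation in which every vertex has `d`
out-neighbours and `d` in-neighbours: give every vertex `d` tokens, and match each edge with a
token of one of its endpoints; this edge–token relation is `2d`-regular, so Hall's theorem
provides the matching. The oriented graph, read as a relation between two copies of the vertex
set, is `d`-regular, hence (Hall again, `d` times) the union of `d` permutations `σᵢ` with
`v → σᵢ v`. Asymmetry of the orientation means that no `σᵢ` has fixed points or `2`-cycles and
that no edge is used by two of them, so the graphs `{v, σᵢ v}` are edge-disjoint and `2`-regular.
A `2`-regular graph is a disjoint union of cycles, and with an odd number of vertices one of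
these cycles is odd.
-/

open SimpleGraph

open Finset

section RegularRelation

variable {α β : Type*} [Finite α] [Finite β]

theorem exists_equiv_subrel_of_regular (R : α → β → Prop) {k : ℕ} (hk : 0 < k)
    (hout : ∀ a, {b | R a b}.ncard = k) (hin : ∀ b, {a | R a b}.ncard = k) :
    ∃ e : α ≃ β, ∀ a, R a (e a) := by
  classical
  have := Fintype.ofFinite α
  have := Fintype.ofFinite β
  have hout' : ∀ a, #{b | R a b} = k := fun a ↦ by
    rw [← hout a, Set.ncard_eq_toFinset_card', Set.toFinset_ofPred]
  have hin' : ∀ b, #{a | R a b} = k := fun b ↦ by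
    rw [← hin b, Set.ncard_eq_toFinset_card', Set.toFinset_ofPred]
  -- Hall's condition: the `k * #A` pairs leaving `A` are among the `k * #N(A)` entering `N(A)`.
  have hall : ∀ A : Finset α, #A ≤ #{b | ∃ a ∈ A, R a b} := fun A ↦ by
    refine Nat.le_of_mul_le_mul_right (card_mul_le_card_mul R (fun a ha ↦ ?_) fun b _ ↦ ?_) hk
    · refine (hout' a).symm.le.trans (card_le_card fun b hb ↦ ?_)
      simp only [bipartiteAbove, mem_filter, mem_univ, true_and] at hb ⊢
      exact ⟨⟨a, ha, hb⟩, hb⟩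
    · exact (hin' b).symm ▸ card_le_card (filter_subset_filter _ (subset_univ A))
  obtain ⟨f, hf, hfR⟩ := (Fintype.all_card_le_filter_rel_iff_exists_injective R).1 hall
  have hcard : Fintype.card α = Fintype.card β := by
    have := card_mul_eq_card_mul R (s := univ) (t := univ) (fun a _ ↦ hout' a) fun b _ ↦ hin' b
    simpa [hk.ne'] using this
  exact ⟨.ofBijective f ((Fintype.bijective_iff_injective_and_card f).2 ⟨hf, hcard⟩), hfR⟩

theorem exists_disjoint_equivs_subrel_of_regular (R : α → β → Prop) (k : ℕ)
    (hout : ∀ a, {b | R a b}.ncard = k) (hin : ∀ b, {a | R a b}.ncard = k) :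
    ∃ σ : Fin k → α ≃ β, (∀ i a, R a (σ i a)) ∧ ∀ a, Function.Injective (σ · a) := by
  induction k generalizing R with
  | zero => exact ⟨Fin.elim0, fun i ↦ i.elim0, fun _ i ↦ i.elim0⟩
  | succ k ih =>
    obtain ⟨e, heR⟩ := exists_equiv_subrel_of_regular R k.succ_pos hout hin
    have hout_e : ∀ a, {b | R a b ∧ b ≠ e a}.ncard = k := fun a ↦ by
      rw [show {b | R a b ∧ b ≠ e a} = {b | R a b} \ {e a} from rfl,
        Set.ncard_sdiff_singleton_of_mem (show e a ∈ {b | R a b} from heR a), hout]; rfl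
    have hin_e : ∀ b, {a | R a b ∧ b ≠ e a}.ncard = k := fun b ↦ by
      have : {a | R a b ∧ b ≠ e a} = {a | R a b} \ {e.symm b} := by
        ext a; simp [Equiv.eq_symm_apply, eq_comm]
      rw [this, Set.ncard_sdiff_singleton_of_mem
        (by simpa only [Set.mem_ofPred_eq, e.apply_symm_apply] using heR (e.symm b)), hin]; rfl
    obtain ⟨σ, hσR, hσinj⟩ := ih _ hout_e hin_e
    refine ⟨Fin.cons e σ, fun i a ↦ ?_, fun a ↦ ?_⟩
    · cases i using Fin.cases with
      | zero => exact heR a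
      | succ i => exact (hσR i a).1
    · have : (fun i ↦ (Fin.cons e σ : Fin (k + 1) → α ≃ β) i a) = Fin.cons (e a) (σ · a) := by
        ext i; cases i using Fin.cases <;> rfl
      rw [this, Fin.cons_injective_iff]
      exact ⟨fun ⟨i, hi⟩ ↦ (hσR i a).2 hi, hσinj a⟩

end RegularRelation

namespace SimpleGraph

variable {V : Type*}

theorem ncard_setOf_mem_edgeSet (G : SimpleGraph V) (v : V) :
    {x : G.edgeSet | v ∈ (x : Sym2 V)}.ncard = (G.neighborSet v).ncard := by
  classical
  rw [← Set.ncard_image_of_injective _ Subtype.val_injective]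
  have : Subtype.val '' {x : G.edgeSet | v ∈ (x : Sym2 V)} = G.incidenceSet v := by
    ext e; simp [incidenceSet, and_comm]
  rw [this, ← Nat.card_coe_set_eq, ← Nat.card_coe_set_eq]
  exact Nat.card_congr (G.incidenceSetEquivNeighborSet v)

section OrientByTail

variable {G : SimpleGraph V} {g : G.edgeSet → V} {x y : V}

def orientByTail (g : G.edgeSet → V) (x y : V) : Prop := ∃ h : G.Adj x y, g ⟨s(x, y), h⟩ = x

theorem apply_mk_swap (g : G.edgeSet → V) (h : G.Adj x y) : g ⟨s(y, x), h.symm⟩ = g ⟨s(x, y), h⟩ :=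
  congrArg g (Subtype.ext Sym2.eq_swap)

theorem orientByTail_asymm : orientByTail g x y → ¬orientByTail g y x := by
  rintro ⟨h, hx⟩ ⟨_, hy⟩
  rw [apply_mk_swap g h, hx] at hy
  exact G.ne_of_adj h hy

variable (hg : ∀ e : G.edgeSet, g e ∈ (e : Sym2 V))
include hg

theorem orientByTail_or (h : G.Adj x y) : orientByTail g x y ∨ orientByTail g y x := by
  rcases Sym2.mem_iff.1 (hg ⟨s(x, y), h⟩) with hx | hy
  · exact .inl ⟨h, hx⟩
  · exact .inr ⟨h.symm, by rw [apply_mk_swap g h, hy]⟩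

theorem ncard_setOf_orientByTail (v : V) :
    {w | orientByTail g v w}.ncard = {e | g e = v}.ncard := by
  refine Set.ncard_congr (fun w hw ↦ ⟨s(v, w), hw.1⟩) (fun w hw ↦ hw.2)
    (fun w w' _ _ h ↦ Sym2.congr_right.1 (congrArg Subtype.val h)) fun ⟨z, hz⟩ hv ↦ ?_
  obtain ⟨w, rfl⟩ : ∃ w, z = s(v, w) := ⟨_, (Sym2.other_spec (hv ▸ hg ⟨z, hz⟩)).symm⟩
  exact ⟨w, ⟨hz, hv⟩, rfl⟩

theorem ncard_setOf_orientByTail_left (v : V) [Finite (G.neighborSet v)] :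
    {w | orientByTail g w v}.ncard = (G.neighborSet v).ncard - {e | g e = v}.ncard := by
  have : {w | orientByTail g w v} = G.neighborSet v \ {w | orientByTail g v w} := by
    ext w
    simp only [Set.mem_sdiff, Set.mem_ofPred_eq, mem_neighborSet]
    exact ⟨fun h ↦ ⟨h.1.symm, orientByTail_asymm h⟩,
      fun h ↦ (orientByTail_or hg h.1).resolve_left h.2⟩
  rw [this, Set.ncard_sdiff (fun w h ↦ h.1) ((G.neighborSet v).toFinite.subset fun w h ↦ h.1),
    ncard_setOf_orientByTail hg]

end OrientByTail

theorem exists_balanced_orientation [Finite V] (G : SimpleGraph V) {d : ℕ}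
    (hreg : ∀ v, (G.neighborSet v).ncard = 2 * d) :
    ∃ R : V → V → Prop, (∀ x y, R x y → G.Adj x y) ∧ (∀ x y, R x y → ¬R y x) ∧
      ∀ v, {w | R v w}.ncard = d ∧ {w | R w v}.ncard = d := by
  rcases Nat.eq_zero_or_pos d with rfl | hd
  · exact ⟨fun _ _ ↦ False, by simp, by simp, by simp⟩
  -- Every vertex holds `d` tokens; an edge is related to the `2d` tokens of its two endpoints,
  -- a token to the `2d` edges at its owner.
  obtain ⟨e, he⟩ : ∃ e : G.edgeSet ≃ V × Fin d, ∀ x : G.edgeSet, (e x).1 ∈ (x : Sym2 V) := by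
    refine exists_equiv_subrel_of_regular (fun (x : G.edgeSet) (t : V × Fin d) ↦ t.1 ∈ (x : Sym2 V))
      (k := 2 * d) (by omega) (fun ⟨x, hx⟩ ↦ ?_) fun t ↦ ?_
    · induction x using Sym2.ind with | _ a b => ?_
      rw [show {t : V × Fin d | t.1 ∈ s(a, b)} = {a, b} ×ˢ Set.univ by ext; simp, Set.ncard_prod,
        Set.ncard_pair (G.ne_of_adj hx), Set.ncard_univ, Nat.card_eq_fintype_card,
        Fintype.card_fin]
    · rw [ncard_setOf_mem_edgeSet, hreg]
  have hfiber : ∀ v, {x | (e x).1 = v}.ncard = d := fun v ↦ by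
    rw [show {x | (e x).1 = v} = e ⁻¹' {t | t.1 = v} from rfl,
      Set.ncard_preimage_of_injective_subset_range e.injective (by simp),
      show {t : V × Fin d | t.1 = v} = {v} ×ˢ Set.univ by ext; simp, Set.ncard_prod,
      Set.ncard_singleton, Set.ncard_univ, Nat.card_eq_fintype_card, Fintype.card_fin, one_mul]
  refine ⟨orientByTail (e · |>.1), fun x y h ↦ h.1, fun x y ↦ orientByTail_asymm,
    fun v ↦ ⟨?_, ?_⟩⟩
  · rw [ncard_setOf_orientByTail he, hfiber]
  · rw [ncard_setOf_orientByTail_left he, hreg, hfiber]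
    omega

theorem exists_odd_isCycle_of_ncard_neighborSet_eq_two [Finite V] {G : SimpleGraph V}
    (hG : ∀ v, (G.neighborSet v).ncard = 2) (hV : Odd (Nat.card V)) :
    ∃ (u : V) (c : G.Walk u u), c.IsCycle ∧ Odd c.length := by
  obtain ⟨K, hK⟩ : G.oddComponents.Nonempty :=
    Set.nonempty_of_ncard_ne_zero ((odd_ncard_oddComponents G).2 hV).pos.ne'
  obtain ⟨v, hv⟩ : K.supp.Nonempty := Set.nonempty_of_ncard_ne_zero hK.pos.ne'
  have hcycles : G.IsCycles := fun w _ ↦ hG w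
  obtain ⟨c, hc, hverts⟩ := hcycles.exists_cycle_toSubgraph_verts_eq_connectedComponentSupp hv
    (Set.nonempty_of_ncard_ne_zero (by simp [hG]))
  refine ⟨v, c, hc, ?_⟩
  classical
  have hsupp : {w | w ∈ c.support} = ↑c.support.tail.toFinset := by
    ext w
    simp only [Set.mem_ofPred_eq, List.coe_toFinset]
    refine ⟨fun hw ↦ ?_, List.mem_of_mem_tail⟩
    rw [← c.cons_tail_support, List.mem_cons] at hw
    rcases hw with rfl | hw
    exacts [c.end_mem_tail_support hc.not_nil, hw]
  rwa [Set.mem_ofPred_eq, ← hverts, Walk.verts_toSubgraph, hsupp, Set.ncard_coe_finset,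
    List.toFinset_card_of_nodup hc.support_nodup, List.length_tail, Walk.length_support,
    Nat.add_sub_cancel] at hK

def ofPerm (σ : Equiv.Perm V) : SimpleGraph V := fromRel fun x y ↦ σ x = y

variable {σ τ : Equiv.Perm V}

@[simp] theorem ofPerm_adj {x y : V} : (ofPerm σ).Adj x y ↔ x ≠ y ∧ (σ x = y ∨ σ y = x) :=
  fromRel_adj ..

theorem ofPerm_le {G : SimpleGraph V} (h : ∀ v, G.Adj v (σ v)) : ofPerm σ ≤ G := by
  rintro x y ⟨-, rfl | rfl⟩
  exacts [h x, (h y).symm]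

theorem ncard_neighborSet_ofPerm (h : ∀ v, σ (σ v) ≠ v) (v : V) :
    ((ofPerm σ).neighborSet v).ncard = 2 := by
  have hfix : σ v ≠ v := fun hv ↦ h v (by rw [hv, hv])
  have : (ofPerm σ).neighborSet v = {σ v, σ.symm v} := by
    ext w
    simp only [mem_neighborSet, ofPerm_adj, Set.mem_insert_iff, Set.mem_singleton_iff,
      Equiv.eq_symm_apply]
    grind
  rw [this, Set.ncard_pair]
  intro heq
  exact h v (by rw [heq, Equiv.apply_symm_apply])

theorem disjoint_ofPerm (h : ∀ x, σ x ≠ τ x) (h' : ∀ x, σ (τ x) ≠ x) :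
    Disjoint (ofPerm σ) (ofPerm τ) := by
  rw [disjoint_iff_inf_le]
  rintro x y ⟨⟨-, hσ | hσ⟩, ⟨-, hτ | hτ⟩⟩
  · exact h x (hσ.trans hτ.symm)
  · exact h' y (by rw [hτ, hσ])
  · exact h' x (by rw [hτ, hσ])
  · exact h y (hσ.trans hτ.symm)

end SimpleGraph

theorem regular_oddOrder_edgeDisjoint_oddCircuits_general {V : Type*} [Fintype V]
    (G : SimpleGraph V) (d : ℕ)
    (hreg : ∀ v : V, (G.neighborSet v).ncard = 2 * d)
    (hodd : Odd (Fintype.card V)) :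
    HasKEdgeDisjointOddCircuits G d := by
  obtain ⟨R, hRG, hRasymm, hRdeg⟩ := G.exists_balanced_orientation hreg
  obtain ⟨σ, hσR, hσinj⟩ :=
    exists_disjoint_equivs_subrel_of_regular R d (fun v ↦ (hRdeg v).1) fun v ↦ (hRdeg v).2
  have hback : ∀ i j x, σ i (σ j x) ≠ x := fun i j x h ↦
    hRasymm _ _ (hσR j x) (by simpa only [h] using hσR i (σ j x))
  have hle : ∀ i, ofPerm (σ i) ≤ G := fun i ↦ ofPerm_le fun v ↦ hRG _ _ (hσR i v)
  choose u c hcyc hlen using fun i ↦ exists_odd_isCycle_of_ncard_neighborSet_eq_two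
    (ncard_neighborSet_ofPerm (hback i i)) (Nat.card_eq_fintype_card (α := V) ▸ hodd)
  refine ⟨u, fun i ↦ (c i).mapLe (hle i), fun i ↦ (hcyc i).mapLe (hle i), by simpa using hlen,
    fun i j hij e hi hj ↦ ?_⟩
  rw [Walk.edges_mapLe_eq_edges] at hi hj
  have hdisj := disjoint_edgeSet.2 (disjoint_ofPerm (fun x h ↦ hij (hσinj x h)) (hback i j))
  exact hdisj.notMem_of_mem_left ((c i).edges_subset_edgeSet hi) ((c j).edges_subset_edgeSet hj)

/-- A connected `2d`-regular graph of odd order contains `d` pairwise edge-disjoint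
odd circuits. -/
theorem regular_oddOrder_edgeDisjoint_oddCircuits {V : Type*} [Fintype V]
    (G : SimpleGraph V) (d : ℕ) (hd : 1 ≤ d) (hconn : G.Connected)
    (hreg : ∀ v : V, (G.neighborSet v).ncard = 2 * d)
    (hodd : Odd (Fintype.card V)) :
    HasKEdgeDisjointOddCircuits G d :=
  regular_oddOrder_edgeDisjoint_oddCircuits_general G d hreg hodd
end
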